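/- arXiv:1209.3678 — 5 statements merged into one kernel-verified Lean document; each statement's English description precedes it below -/
import Mathlib

section
/- The Laplace transform L, defined by (Lφ)(ρ) = ∫₀^∞ e^{-ρσ} φ(σ) dσ, is a bounded self-adjoint operator on L²((0,∞)) with operator norm √π, and L² = H where H is the operator with kernel 1/(ρ+σ). -/
open MeasureTheory Filter Set Topology

noncomputable section

/-- The Hankel-type operator with kernel `1/(ρ+σ)` on the half-line. -/
def Hankel (φ : ℝ → ℂ) (ρ : ℝ) : ℂ := ∫ σ in Ioi (0:ℝ), φ σ / (↑ρ + ↑σ)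

/-- The Laplace transform on the half-line. -/
def LaplaceT (φ : ℝ → ℂ) (ρ : ℝ) : ℂ := ∫ σ in Ioi (0:ℝ), (Real.exp (-(ρ * σ)) : ℂ) * φ σ

open Real Function
open scoped ENNReal

/-!
Boundedness is Schur's test with the weight `σ ^ (-1/2)`: since
`∫₀^∞ e^{-ρσ} σ^{-1/2} dσ = √π ρ^{-1/2}`, both Schur integrals are at most `√π` times the weight.
Self-adjointness is Fubini, the absolute integrability again coming from the Schur bound.
Self-adjointness applied to `ψ = e^{-ρ·}` gives `L(Lφ)(ρ) = ⟨φ, L e^{-ρ·}⟩ = ∫ φ(σ) / (ρ + σ) dσ`.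
Finally, for `φ_s(σ) = σ^{s-1} e^{-σ}` one has `Lφ_s(ρ) = Γ(s) (1 + ρ)^{-s}`, so
`‖Lφ_s‖² / ‖φ_s‖² = 2^{2s-1} Γ(s)² / Γ(2s)`, which tends to `Γ(1/2)² = π` as `s ↓ 1/2`.
-/

section Schur

variable {α β : Type*} [MeasurableSpace α] [MeasurableSpace β] {μ : Measure α} {ν : Measure β}

theorem ENNReal.rpow_inv_two_sq (x : ℝ≥0∞) : (x ^ (2⁻¹ : ℝ)) ^ 2 = x := by
  simpa using ENNReal.rpow_inv_natCast_pow two_ne_zero x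

theorem ENNReal.sq_rpow_inv_two (x : ℝ≥0∞) : (x ^ 2) ^ (2⁻¹ : ℝ) = x := by
  simpa using ENNReal.pow_rpow_inv_natCast two_ne_zero x

theorem sq_lintegral_rpow_inv_two_mul_le {a b : α → ℝ≥0∞} (ha : AEMeasurable a μ)
    (hb : AEMeasurable b μ) :
    (∫⁻ x, a x ^ (2⁻¹ : ℝ) * b x ^ (2⁻¹ : ℝ) ∂μ) ^ 2 ≤ (∫⁻ x, a x ∂μ) * ∫⁻ x, b x ∂μ := by
  calc (∫⁻ x, a x ^ (2⁻¹ : ℝ) * b x ^ (2⁻¹ : ℝ) ∂μ) ^ 2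
      ≤ ((∫⁻ x, a x ∂μ) ^ (2⁻¹ : ℝ) * (∫⁻ x, b x ∂μ) ^ (2⁻¹ : ℝ)) ^ 2 := by
        gcongr
        exact ENNReal.lintegral_mul_norm_pow_le ha hb (by norm_num) (by norm_num) (by norm_num)
    _ = _ := by rw [mul_pow, ENNReal.rpow_inv_two_sq, ENNReal.rpow_inv_two_sq]

theorem sq_lintegral_mul_le {f g : α → ℝ≥0∞} (hf : AEMeasurable f μ) (hg : AEMeasurable g μ) :
    (∫⁻ x, f x * g x ∂μ) ^ 2 ≤ (∫⁻ x, f x ^ 2 ∂μ) * ∫⁻ x, g x ^ 2 ∂μ := by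
  have h := sq_lintegral_rpow_inv_two_mul_le (hf.pow_const 2) (hg.pow_const 2)
  simp only [ENNReal.sq_rpow_inv_two] at h
  exact h

theorem sq_lintegral_mul_le_of_weight {k f w : α → ℝ≥0∞} (hk : AEMeasurable k μ)
    (hf : AEMeasurable f μ) (hw : AEMeasurable w μ) (hw0 : ∀ᵐ x ∂μ, w x ≠ 0)
    (hwtop : ∀ᵐ x ∂μ, w x ≠ ∞) :
    (∫⁻ x, k x * f x ∂μ) ^ 2 ≤ (∫⁻ x, k x * w x ∂μ) * ∫⁻ x, k x * (f x ^ 2 / w x) ∂μ := by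
  have hsplit : (fun x => k x * f x) =ᵐ[μ]
      fun x => (k x * w x) ^ (2⁻¹ : ℝ) * (k x * (f x ^ 2 / w x)) ^ (2⁻¹ : ℝ) := by
    filter_upwards [hw0, hwtop] with x hx0 hxtop
    rw [← ENNReal.mul_rpow_of_nonneg _ _ (by norm_num), div_eq_mul_inv,
      show k x * w x * (k x * (f x ^ 2 * (w x)⁻¹)) = (k x * f x) ^ 2 * (w x * (w x)⁻¹) by ring,
      ENNReal.mul_inv_cancel hx0 hxtop, mul_one, ENNReal.sq_rpow_inv_two]
  rw [lintegral_congr_ae hsplit]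
  exact sq_lintegral_rpow_inv_two_mul_le (hk.mul hw) (hk.mul ((hf.pow_const 2).div hw))

theorem lintegral_sq_lintegral_mul_le_of_schur [SFinite μ] [SFinite ν] {K : α → β → ℝ≥0∞}
    (hK : Measurable (uncurry K)) {p : α → ℝ≥0∞} {q : β → ℝ≥0∞} (hp : Measurable p)
    (hq : Measurable q) (hq0 : ∀ᵐ y ∂ν, q y ≠ 0) (hqtop : ∀ᵐ y ∂ν, q y ≠ ∞) {A B : ℝ≥0∞}
    (hA : ∀ᵐ x ∂μ, ∫⁻ y, K x y * q y ∂ν ≤ A * p x)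
    (hB : ∀ᵐ y ∂ν, ∫⁻ x, K x y * p x ∂μ ≤ B * q y) {f : β → ℝ≥0∞} (hf : AEMeasurable f ν) :
    ∫⁻ x, (∫⁻ y, K x y * f y ∂ν) ^ 2 ∂μ ≤ A * B * ∫⁻ y, f y ^ 2 ∂ν := by
  set g : β → ℝ≥0∞ := fun y => f y ^ 2 / q y
  have hg : AEMeasurable g ν := (hf.pow_const 2).div hq.aemeasurable
  have hKx : ∀ x, Measurable (K x) := fun x => hK.comp measurable_prodMk_left
  calc ∫⁻ x, (∫⁻ y, K x y * f y ∂ν) ^ 2 ∂μ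
      ≤ ∫⁻ x, ∫⁻ y, A * p x * (K x y * g y) ∂ν ∂μ := by
        refine lintegral_mono_ae ?_
        filter_upwards [hA] with x hx
        rw [lintegral_const_mul'' _ (by fun_prop)]
        exact (sq_lintegral_mul_le_of_weight (hKx x).aemeasurable hf hq.aemeasurable hq0
          hqtop).trans (mul_le_mul_left hx _)
    _ = ∫⁻ y, ∫⁻ x, A * p x * (K x y * g y) ∂μ ∂ν :=
        lintegral_lintegral_swap (((hp.comp measurable_fst).const_mul A).aemeasurable.mul
          (hK.aemeasurable.mul hg.comp_snd))
    _ = ∫⁻ y, A * (∫⁻ x, K x y * p x ∂μ) * g y ∂ν := by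
        refine lintegral_congr fun y => ?_
        rw [mul_assoc, ← lintegral_mul_const _ (by fun_prop), ← lintegral_const_mul _ (by fun_prop)]
        congr 1; ext x; ring
    _ ≤ ∫⁻ y, A * (B * q y) * g y ∂ν := by
        refine lintegral_mono_ae ?_
        filter_upwards [hB] with y hy
        gcongr
    _ = A * B * ∫⁻ y, f y ^ 2 ∂ν := by
        rw [← lintegral_const_mul'' _ (hf.pow_const 2)]
        refine lintegral_congr_ae ?_
        filter_upwards [hq0, hqtop] with y hy0 hytop
        rw [mul_assoc, mul_assoc, ENNReal.mul_div_cancel hy0 hytop, mul_assoc]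

end Schur

theorem eLpNorm_two_sq_eq_lintegral {α ε : Type*} [MeasurableSpace α] [ENorm ε] (f : α → ε)
    (μ : Measure α) :
    eLpNorm f 2 μ ^ 2 = ∫⁻ x, ‖f x‖ₑ ^ 2 ∂μ := by
  simpa using eLpNorm_nnreal_pow_eq_lintegral (f := f) (μ := μ) (p := 2) two_ne_zero

theorem eLpNorm_ofReal_two_sq_eq_integral {α : Type*} [MeasurableSpace α] {μ : Measure α}
    {f : α → ℝ} (hf : Integrable (fun x => f x ^ 2) μ) :
    eLpNorm (fun x => (f x : ℂ)) 2 μ ^ 2 = ENNReal.ofReal (∫ x, f x ^ 2 ∂μ) := by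
  rw [eLpNorm_two_sq_eq_lintegral,
    ofReal_integral_eq_lintegral_ofReal hf (ae_of_all _ fun x => sq_nonneg _)]
  refine lintegral_congr fun x => ?_
  rw [← ofReal_norm, Complex.norm_real, ← ENNReal.ofReal_pow (norm_nonneg _), norm_eq_abs, sq_abs]

theorem MeasureTheory.MemLp.lintegral_enorm_sq_lt_top {α E : Type*} [MeasurableSpace α]
    {μ : Measure α} [NormedAddCommGroup E] {f : α → E} (hf : MemLp f 2 μ) :
    ∫⁻ x, ‖f x‖ₑ ^ 2 ∂μ < ∞ := by
  rw [← eLpNorm_two_sq_eq_lintegral]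
  exact ENNReal.pow_lt_top hf.2

theorem integral_Ioi_add_one_rpow {a : ℝ} (ha : a < -1) :
    ∫ ρ in Ioi 0, (ρ + 1) ^ a = -1 / (a + 1) := by
  have hshift : ∫ ρ in Ioi (0 : ℝ), (ρ + 1) ^ a = ∫ ρ in Ioi (1 : ℝ), ρ ^ a := by
    rw [← integral_indicator measurableSet_Ioi, ← integral_indicator measurableSet_Ioi,
      ← integral_add_right_eq_self ((Ioi (1 : ℝ)).indicator fun ρ => ρ ^ a) 1]
    congr 1
    ext ρ
    simp only [indicator, mem_Ioi, lt_add_iff_pos_left]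
  rw [hshift, integral_Ioi_rpow_of_lt ha one_pos, one_rpow]

theorem continuousAt_Gamma_of_pos {s : ℝ} (hs : 0 < s) : ContinuousAt Gamma s :=
  (differentiableAt_Gamma fun m hm => by linarith [(Nat.cast_nonneg m : (0 : ℝ) ≤ m)]).continuousAt

theorem integral_exp_neg_mul_mul_rpow_neg_half {ρ : ℝ} (hρ : 0 < ρ) :
    ∫ σ in Ioi 0, exp (-(ρ * σ)) * σ ^ (-(1 / 2) : ℝ) = √π * ρ ^ (-(1 / 2) : ℝ) := by
  have h := integral_rpow_mul_exp_neg_mul_Ioi (a := 1 / 2) (by norm_num) hρ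
  rw [Gamma_one_half_eq, one_div ρ, inv_rpow hρ.le, ← rpow_neg hρ.le,
    show (1 / 2 - 1 : ℝ) = -(1 / 2) by norm_num] at h
  simp_rw [mul_comm (exp _), h, mul_comm]

theorem lintegral_exp_neg_mul_mul_rpow_neg_half {ρ : ℝ} (hρ : 0 < ρ) :
    ∫⁻ σ in Ioi 0, ENNReal.ofReal (exp (-(ρ * σ))) * ENNReal.ofReal (σ ^ (-(1 / 2) : ℝ)) =
      ENNReal.ofReal √π * ENNReal.ofReal (ρ ^ (-(1 / 2) : ℝ)) := by
  have hI := integral_exp_neg_mul_mul_rpow_neg_half hρ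
  have hint : IntegrableOn (fun σ => exp (-(ρ * σ)) * σ ^ (-(1 / 2) : ℝ)) (Ioi 0) :=
    Integrable.of_integral_ne_zero (by rw [hI]; positivity)
  rw [← ENNReal.ofReal_mul (sqrt_nonneg _), ← hI, ofReal_integral_eq_lintegral_ofReal hint]
  · refine setLIntegral_congr_fun measurableSet_Ioi fun σ hσ => ?_
    rw [ENNReal.ofReal_mul (exp_pos _).le]
  · filter_upwards [ae_restrict_mem measurableSet_Ioi] with σ hσ
    exact mul_nonneg (exp_pos _).le (rpow_nonneg (le_of_lt hσ) _)

theorem lintegral_laplace_sq_le {f : ℝ → ℝ≥0∞} (hf : AEMeasurable f (volume.restrict (Ioi 0))) :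
    ∫⁻ ρ in Ioi 0, (∫⁻ σ in Ioi 0, ENNReal.ofReal (exp (-(ρ * σ))) * f σ) ^ 2 ≤
      ENNReal.ofReal π * ∫⁻ σ in Ioi 0, f σ ^ 2 := by
  have hrow : ∀ᵐ ρ ∂volume.restrict (Ioi (0 : ℝ)),
      ∫⁻ σ in Ioi 0, ENNReal.ofReal (exp (-(ρ * σ))) * ENNReal.ofReal (σ ^ (-(1 / 2) : ℝ)) ≤
        ENNReal.ofReal √π * ENNReal.ofReal (ρ ^ (-(1 / 2) : ℝ)) := by
    filter_upwards [ae_restrict_mem measurableSet_Ioi] with ρ hρ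
    exact (lintegral_exp_neg_mul_mul_rpow_neg_half hρ).le
  have hcol : ∀ᵐ σ ∂volume.restrict (Ioi (0 : ℝ)),
      ∫⁻ ρ in Ioi 0, ENNReal.ofReal (exp (-(ρ * σ))) * ENNReal.ofReal (ρ ^ (-(1 / 2) : ℝ)) ≤
        ENNReal.ofReal √π * ENNReal.ofReal (σ ^ (-(1 / 2) : ℝ)) := by
    filter_upwards [ae_restrict_mem measurableSet_Ioi] with σ hσ
    simp_rw [mul_comm _ σ]
    exact (lintegral_exp_neg_mul_mul_rpow_neg_half hσ).le
  have hpos : ∀ᵐ σ ∂volume.restrict (Ioi (0 : ℝ)), ENNReal.ofReal (σ ^ (-(1 / 2) : ℝ)) ≠ 0 := by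
    filter_upwards [ae_restrict_mem measurableSet_Ioi] with σ hσ
    exact (ENNReal.ofReal_pos.2 (rpow_pos_of_pos hσ _)).ne'
  have hschur := lintegral_sq_lintegral_mul_le_of_schur
    (K := fun ρ σ => ENNReal.ofReal (exp (-(ρ * σ)))) (by fun_prop) (by fun_prop) (by fun_prop)
    hpos (ae_of_all _ fun _ => ENNReal.ofReal_ne_top) hrow hcol hf
  rwa [← ENNReal.ofReal_mul (sqrt_nonneg _), mul_self_sqrt pi_pos.le] at hschur

theorem enorm_laplaceT_le (φ : ℝ → ℂ) (ρ : ℝ) :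
    ‖LaplaceT φ ρ‖ₑ ≤ ∫⁻ σ in Ioi 0, ENNReal.ofReal (exp (-(ρ * σ))) * ‖φ σ‖ₑ := by
  refine (enorm_integral_le_lintegral_enorm _).trans_eq (lintegral_congr fun σ => ?_)
  rw [enorm_mul, ← ofReal_norm, Complex.norm_real, norm_of_nonneg (exp_pos _).le]

theorem aestronglyMeasurable_laplaceT {φ : ℝ → ℂ}
    (hφ : AEStronglyMeasurable φ (volume.restrict (Ioi 0))) :
    AEStronglyMeasurable (LaplaceT φ) (volume.restrict (Ioi 0)) :=
  ((by fun_prop : Continuous fun p : ℝ × ℝ => (exp (-(p.1 * p.2)) : ℂ)).aestronglyMeasurable.mul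
    hφ.comp_snd).integral_prod_right'

theorem eLpNorm_laplaceT_le {φ : ℝ → ℂ} (hφ : AEStronglyMeasurable φ (volume.restrict (Ioi 0))) :
    eLpNorm (LaplaceT φ) 2 (volume.restrict (Ioi 0)) ≤
      ENNReal.ofReal √π * eLpNorm φ 2 (volume.restrict (Ioi 0)) := by
  rw [← ENNReal.pow_le_pow_left_iff two_ne_zero, mul_pow, eLpNorm_two_sq_eq_lintegral,
    eLpNorm_two_sq_eq_lintegral,    ← ENNReal.ofReal_pow (sqrt_nonneg _), sq_sqrt pi_pos.le]
  exact (lintegral_mono fun ρ => pow_le_pow_left' (enorm_laplaceT_le φ ρ) 2).trans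
    (lintegral_laplace_sq_le hφ.enorm)

theorem MeasureTheory.MemLp.laplaceT {φ : ℝ → ℂ} (hφ : MemLp φ 2 (volume.restrict (Ioi 0))) :
    MemLp (LaplaceT φ) 2 (volume.restrict (Ioi 0)) :=
  ⟨aestronglyMeasurable_laplaceT hφ.1,
    (eLpNorm_laplaceT_le hφ.1).trans_lt (ENNReal.mul_lt_top ENNReal.ofReal_lt_top hφ.2)⟩

theorem integrable_exp_neg_mul_mul_conj {φ ψ : ℝ → ℂ} (hφ : MemLp φ 2 (volume.restrict (Ioi 0)))
    (hψ : MemLp ψ 2 (volume.restrict (Ioi 0))) :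
    Integrable (fun p : ℝ × ℝ => (exp (-(p.1 * p.2)) : ℂ) * φ p.2 * starRingEnd ℂ (ψ p.1))
      ((volume.restrict (Ioi 0)).prod (volume.restrict (Ioi 0))) := by
  set μ := volume.restrict (Ioi (0 : ℝ))
  have hkernel : Continuous fun p : ℝ × ℝ => (exp (-(p.1 * p.2)) : ℂ) := by fun_prop
  have hmeas : AEStronglyMeasurable
      (fun p : ℝ × ℝ => (exp (-(p.1 * p.2)) : ℂ) * φ p.2 * starRingEnd ℂ (ψ p.1)) (μ.prod μ) :=
    (hkernel.aestronglyMeasurable.mul hφ.1.comp_snd).mul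
      (Complex.continuous_conj.comp_aestronglyMeasurable hψ.1.comp_fst)
  have hφm : AEMeasurable (fun σ => ‖φ σ‖ₑ) μ := hφ.1.enorm
  set F : ℝ → ℝ≥0∞ := fun ρ => ∫⁻ σ in Ioi 0, ENNReal.ofReal (exp (-(ρ * σ))) * ‖φ σ‖ₑ
  have hF : AEMeasurable F μ :=
    ((by fun_prop : Measurable fun p : ℝ × ℝ => ENNReal.ofReal (exp (-(p.1 * p.2)))).aemeasurable
      |>.mul hφm.comp_snd).lintegral_prod_right'
  have hF2 : ∫⁻ ρ, F ρ ^ 2 ∂μ < ∞ := (lintegral_laplace_sq_le hφm).trans_lt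
    (ENNReal.mul_lt_top ENNReal.ofReal_lt_top hφ.lintegral_enorm_sq_lt_top)
  refine ⟨hmeas, ?_⟩
  calc ∫⁻ p, ‖(exp (-(p.1 * p.2)) : ℂ) * φ p.2 * starRingEnd ℂ (ψ p.1)‖ₑ ∂μ.prod μ
      = ∫⁻ ρ, F ρ * ‖ψ ρ‖ₑ ∂μ := by
        rw [lintegral_prod _ hmeas.enorm]
        refine lintegral_congr fun ρ => ?_
        simp only [F]
        rw [← lintegral_mul_const'' _ (by fun_prop)]
        refine lintegral_congr fun σ => ?_
        rw [enorm_mul, enorm_mul, RCLike.enorm_conj, ← ofReal_norm, Complex.norm_real,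
          norm_of_nonneg (exp_pos _).le]
    _ < ∞ := by
        have hsq := (sq_lintegral_mul_le hF hψ.1.enorm).trans_lt
          (ENNReal.mul_lt_top hF2 hψ.lintegral_enorm_sq_lt_top)
        simpa using hsq

theorem integral_laplaceT_mul_conj {φ ψ : ℝ → ℂ} (hφ : MemLp φ 2 (volume.restrict (Ioi 0)))
    (hψ : MemLp ψ 2 (volume.restrict (Ioi 0))) :
    ∫ ρ in Ioi 0, LaplaceT φ ρ * starRingEnd ℂ (ψ ρ) =
      ∫ ρ in Ioi 0, φ ρ * starRingEnd ℂ (LaplaceT ψ ρ) := by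
  calc ∫ ρ in Ioi 0, LaplaceT φ ρ * starRingEnd ℂ (ψ ρ)
      = ∫ ρ in Ioi 0, ∫ σ in Ioi 0, (exp (-(ρ * σ)) : ℂ) * φ σ * starRingEnd ℂ (ψ ρ) := by
        simp only [LaplaceT, integral_mul_const]
    _ = ∫ σ in Ioi 0, ∫ ρ in Ioi 0, (exp (-(ρ * σ)) : ℂ) * φ σ * starRingEnd ℂ (ψ ρ) :=
        integral_integral_swap (integrable_exp_neg_mul_mul_conj hφ hψ)
    _ = ∫ σ in Ioi 0, φ σ * starRingEnd ℂ (LaplaceT ψ σ) := by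
        simp only [LaplaceT, ← integral_conj, ← integral_const_mul, map_mul, Complex.conj_ofReal]
        refine integral_congr_ae (ae_of_all _ fun σ => integral_congr_ae (ae_of_all _ fun ρ => ?_))
        simp only [mul_comm σ ρ]
        ring

theorem memLp_exp_neg_mul {ρ : ℝ} (hρ : 0 < ρ) :
    MemLp (fun τ => (exp (-(ρ * τ)) : ℂ)) 2 (volume.restrict (Ioi 0)) := by
  refine (memLp_two_iff_integrable_sq_norm (by fun_prop)).2 ?_
  refine (exp_neg_integrableOn_Ioi 0 (mul_pos two_pos hρ)).congr_fun (fun τ _ => ?_)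
    measurableSet_Ioi
  rw [Complex.norm_real, norm_of_nonneg (exp_pos _).le, ← exp_nat_mul]
  ring_nf

theorem laplaceT_exp_neg_mul {ρ σ : ℝ} (h : 0 < ρ + σ) :
    LaplaceT (fun τ => (exp (-(ρ * τ)) : ℂ)) σ = ((ρ + σ)⁻¹ : ℝ) := by
  have hexp : ∀ τ, exp (-(σ * τ)) * exp (-(ρ * τ)) = exp (-(ρ + σ) * τ) := fun τ => by
    rw [← exp_add]; ring_nf
  simp_rw [LaplaceT, ← Complex.ofReal_mul, hexp]
  rw [integral_complex_ofReal, integral_exp_mul_Ioi (neg_lt_zero.2 h), mul_zero, exp_zero,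
    neg_div_neg_eq, one_div]

theorem laplaceT_laplaceT_eq_hankel {φ : ℝ → ℂ} (hφ : MemLp φ 2 (volume.restrict (Ioi 0)))
    {ρ : ℝ} (hρ : 0 < ρ) : LaplaceT (LaplaceT φ) ρ = Hankel φ ρ := by
  calc LaplaceT (LaplaceT φ) ρ
      = ∫ τ in Ioi 0, LaplaceT φ τ * starRingEnd ℂ (exp (-(ρ * τ)) : ℂ) := by
        simp only [LaplaceT, Complex.conj_ofReal, mul_comm]
    _ = ∫ σ in Ioi 0, φ σ * starRingEnd ℂ (LaplaceT (fun τ => (exp (-(ρ * τ)) : ℂ)) σ) :=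
        integral_laplaceT_mul_conj hφ (memLp_exp_neg_mul hρ)
    _ = Hankel φ ρ := by
        refine setIntegral_congr_fun measurableSet_Ioi fun σ hσ => ?_
        rw [laplaceT_exp_neg_mul (add_pos hρ hσ), Complex.conj_ofReal, div_eq_mul_inv]
        push_cast
        rfl

def rpowMulExpNeg (s σ : ℝ) : ℂ := ((σ ^ (s - 1) * exp (-σ) : ℝ) : ℂ)

theorem integral_rpow_mul_exp_neg_sq {s : ℝ} (hs : 1 / 2 < s) :
    ∫ σ in Ioi 0, (σ ^ (s - 1) * exp (-σ)) ^ 2 = (1 / 2) ^ (2 * s - 1) * Gamma (2 * s - 1) := by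
  rw [← integral_rpow_mul_exp_neg_mul_Ioi (by linarith) two_pos]
  refine setIntegral_congr_fun measurableSet_Ioi fun σ hσ => ?_
  rw [mul_pow, ← rpow_mul_natCast (le_of_lt hσ), ← exp_nat_mul]
  ring_nf

theorem laplaceT_rpowMulExpNeg {s ρ : ℝ} (hs : 0 < s) (hρ : -1 < ρ) :
    LaplaceT (rpowMulExpNeg s) ρ = ((1 / (ρ + 1)) ^ s * Gamma s : ℝ) := by
  rw [← integral_rpow_mul_exp_neg_mul_Ioi hs (by linarith), LaplaceT, ← integral_complex_ofReal]
  refine setIntegral_congr_fun measurableSet_Ioi fun σ _ => ?_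
  simp only [rpowMulExpNeg, ← Complex.ofReal_mul]
  congr 1
  rw [mul_left_comm, ← exp_add]
  ring_nf

theorem eLpNorm_rpowMulExpNeg_two_sq {s : ℝ} (hs : 1 / 2 < s) :
    eLpNorm (rpowMulExpNeg s) 2 (volume.restrict (Ioi 0)) ^ 2 =
      ENNReal.ofReal ((1 / 2) ^ (2 * s - 1) * Gamma (2 * s - 1)) := by
  have hI := integral_rpow_mul_exp_neg_sq hs
  have hpos : 0 < (1 / 2 : ℝ) ^ (2 * s - 1) * Gamma (2 * s - 1) :=
    mul_pos (rpow_pos_of_pos (by norm_num) _) (Gamma_pos_of_pos (by linarith))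
  rw [← hI]
  exact eLpNorm_ofReal_two_sq_eq_integral
    (Integrable.of_integral_ne_zero (by rw [hI]; exact hpos.ne'))

theorem eLpNorm_laplaceT_rpowMulExpNeg_two_sq {s : ℝ} (hs : 1 / 2 < s) :
    eLpNorm (LaplaceT (rpowMulExpNeg s)) 2 (volume.restrict (Ioi 0)) ^ 2 =
      ENNReal.ofReal (Gamma s ^ 2 / (2 * s - 1)) := by
  have hI : ∫ ρ in Ioi 0, ((1 / (ρ + 1)) ^ s * Gamma s) ^ 2 = Gamma s ^ 2 / (2 * s - 1) := by
    have hpow : ∀ ρ ∈ Ioi (0 : ℝ), ((1 / (ρ + 1)) ^ s * Gamma s) ^ 2 =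
        Gamma s ^ 2 * (ρ + 1) ^ (-(2 * s)) := fun ρ hρ => by
      have hρ1 : 0 ≤ ρ + 1 := by linarith [mem_Ioi.1 hρ]
      rw [one_div, inv_rpow hρ1, ← rpow_neg hρ1, mul_pow, ← rpow_mul_natCast hρ1]
      ring_nf
    rw [setIntegral_congr_fun measurableSet_Ioi hpow, integral_const_mul,
      integral_Ioi_add_one_rpow (by linarith), neg_div, ← div_neg]
    ring_nf
  have hae : LaplaceT (rpowMulExpNeg s) =ᵐ[volume.restrict (Ioi 0)]
      fun ρ => (((1 / (ρ + 1)) ^ s * Gamma s : ℝ) : ℂ) := by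
    filter_upwards [ae_restrict_mem measurableSet_Ioi] with ρ hρ
    exact laplaceT_rpowMulExpNeg (by linarith) (by linarith [mem_Ioi.1 hρ])
  rw [eLpNorm_congr_ae hae, ← hI]
  have hpos : 0 < Gamma s ^ 2 / (2 * s - 1) :=
    div_pos (pow_pos (Gamma_pos_of_pos (by linarith)) 2) (by linarith)
  exact eLpNorm_ofReal_two_sq_eq_integral
    (Integrable.of_integral_ne_zero (by rw [hI]; exact hpos.ne'))

theorem memLp_rpowMulExpNeg {s : ℝ} (hs : 1 / 2 < s) :
    MemLp (rpowMulExpNeg s) 2 (volume.restrict (Ioi 0)) := by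
  refine ⟨by unfold rpowMulExpNeg; fun_prop, ?_⟩
  have h : eLpNorm (rpowMulExpNeg s) 2 (volume.restrict (Ioi 0)) ^ 2 < ∞ := by
    rw [eLpNorm_rpowMulExpNeg_two_sq hs]
    exact ENNReal.ofReal_lt_top
  simpa using h

theorem Gamma_sq_le_of_eLpNorm_laplaceT_le {D : ℝ} (hD : 0 ≤ D)
    (hbound : ∀ φ : ℝ → ℂ, MemLp φ 2 (volume.restrict (Ioi 0)) →
      eLpNorm (LaplaceT φ) 2 (volume.restrict (Ioi 0)) ≤
        ENNReal.ofReal D * eLpNorm φ 2 (volume.restrict (Ioi 0)))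
    {s : ℝ} (hs : 1 / 2 < s) :
    Gamma s ^ 2 ≤ D ^ 2 * ((1 / 2) ^ (2 * s - 1) * Gamma (2 * s)) := by
  have h := pow_le_pow_left' (hbound _ (memLp_rpowMulExpNeg hs)) 2
  have hnorm : 0 ≤ (1 / 2 : ℝ) ^ (2 * s - 1) * Gamma (2 * s - 1) :=
    mul_nonneg (rpow_nonneg (by norm_num) _) (Gamma_pos_of_pos (by linarith)).le
  rw [mul_pow, eLpNorm_rpowMulExpNeg_two_sq hs, eLpNorm_laplaceT_rpowMulExpNeg_two_sq hs,
    ← ENNReal.ofReal_pow hD, ← ENNReal.ofReal_mul (by positivity),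
    ENNReal.ofReal_le_ofReal_iff (mul_nonneg (sq_nonneg _) hnorm), div_le_iff₀ (by linarith)] at h
  rw [show Gamma (2 * s) = (2 * s - 1) * Gamma (2 * s - 1) by
    rw [← Gamma_add_one (by linarith), sub_add_cancel]]
  linarith

theorem sqrt_pi_le_of_eLpNorm_laplaceT_le {C : ℝ}
    (hC : ∀ φ : ℝ → ℂ, MemLp φ 2 (volume.restrict (Ioi 0)) →
      eLpNorm (LaplaceT φ) 2 (volume.restrict (Ioi 0)) ≤
        ENNReal.ofReal C * eLpNorm φ 2 (volume.restrict (Ioi 0))) :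
    √π ≤ C := by
  -- `ENNReal.ofReal` sends a negative `C` to `0`, so only `max C 0` is controlled by `hC`.
  set D := max C 0
  have hD : ENNReal.ofReal C = ENNReal.ofReal D := by simp [D, ENNReal.ofReal_max]
  have hlim : Gamma (1 / 2) ^ 2 ≤
      D ^ 2 * ((1 / 2 : ℝ) ^ (2 * (1 / 2 : ℝ) - 1) * Gamma (2 * (1 / 2))) := by
    have hpow : ContinuousAt (fun s : ℝ => (1 / 2 : ℝ) ^ (2 * s - 1)) (1 / 2) :=
      (continuousAt_const_rpow (by norm_num)).comp (f := fun s : ℝ => 2 * s - 1) (by fun_prop)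
    have hGamma : ContinuousAt (fun s : ℝ => Gamma (2 * s)) (1 / 2) :=
      (continuousAt_Gamma_of_pos (s := 2 * (1 / 2)) (by norm_num)).comp
        (f := fun s : ℝ => 2 * s) (by fun_prop)
    have hrhs : ContinuousAt (fun s => D ^ 2 * ((1 / 2 : ℝ) ^ (2 * s - 1) * Gamma (2 * s)))
        (1 / 2) := by fun_prop
    exact le_of_tendsto_of_tendsto (b := 𝓝[>] (1 / 2 : ℝ))
      (((continuousAt_Gamma_of_pos (by norm_num)).pow 2).tendsto.mono_left nhdsWithin_le_nhds)
      (hrhs.tendsto.mono_left nhdsWithin_le_nhds)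
      (eventually_nhdsWithin_of_forall fun s hs =>
        Gamma_sq_le_of_eLpNorm_laplaceT_le (le_max_right C 0) (hD ▸ hC) hs)
  norm_num [Gamma_one_half_eq, pi_pos.le] at hlim
  exact le_max_iff.1 (sqrt_le_iff.2 ⟨le_max_right _ _, hlim⟩) |>.resolve_right
    (not_le.2 (sqrt_pos.2 pi_pos))

/-- The Laplace transform is bounded and self-adjoint on `L²((0,∞))` with norm `√π`,
and `L² = H`. -/
theorem laplace_bounded_selfAdjoint_sq_eq_hankel :
    (∀ φ : ℝ → ℂ, MemLp φ 2 (volume.restrict (Ioi 0)) →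
      MemLp (LaplaceT φ) 2 (volume.restrict (Ioi 0)) ∧
      eLpNorm (LaplaceT φ) 2 (volume.restrict (Ioi 0)) ≤
        ENNReal.ofReal (Real.sqrt Real.pi) * eLpNorm φ 2 (volume.restrict (Ioi 0))) ∧
    (∀ φ ψ : ℝ → ℂ, MemLp φ 2 (volume.restrict (Ioi 0)) →
      MemLp ψ 2 (volume.restrict (Ioi 0)) →
      (∫ ρ in Ioi (0:ℝ), LaplaceT φ ρ * (starRingEnd ℂ) (ψ ρ)) =
      ∫ ρ in Ioi (0:ℝ), φ ρ * (starRingEnd ℂ) (LaplaceT ψ ρ)) ∧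
    (∀ C : ℝ, (∀ φ : ℝ → ℂ, MemLp φ 2 (volume.restrict (Ioi 0)) →
        eLpNorm (LaplaceT φ) 2 (volume.restrict (Ioi 0)) ≤
          ENNReal.ofReal C * eLpNorm φ 2 (volume.restrict (Ioi 0))) →
      Real.sqrt Real.pi ≤ C) ∧
    (∀ φ : ℝ → ℂ, MemLp φ 2 (volume.restrict (Ioi 0)) →
      ∀ ρ ∈ Ioi (0:ℝ), LaplaceT (LaplaceT φ) ρ = Hankel φ ρ) :=
  ⟨fun _ hφ => ⟨hφ.laplaceT, eLpNorm_laplaceT_le hφ.1⟩,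
    fun _ _ hφ hψ => integral_laplaceT_mul_conj hφ hψ,
    fun _ hC => sqrt_pi_le_of_eLpNorm_laplaceT_le hC,
    fun _ hφ _ hρ => laplaceT_laplaceT_eq_hankel hφ hρ⟩
end
end

section
/- For any a ∈ ℝ and t ∈ ℝ, the limit as ε → 0⁺ of ∫_t^∞ cos(ar) e^{−εr} dr equals, in the sense of tempered distributions in a, π δ₀(a) − sin(ta)/a. -/
/-!
For `ε > 0` the inner integral is elementary:
`∫_t^∞ cos(ar) e^{-εr} dr = e^{-εt} (ε cos(at) - a sin(at)) / (ε² + a²)`.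
Paired with `φ`, the first term is `e^{-εt}` times the Poisson kernel `ε / (ε² + a²)` applied
to `cos(at) φ(a)`; the kernel is an approximate identity of total mass `π`, so this tends to
`π φ(0)`.
The second term converges to `∫ sin(ta)/a φ(a) da` by dominated convergence, because
`|a sin(ta)| / (ε² + a²) ≤ |t|`.
-/

open MeasureTheory Filter Set Topology Real

section ClosedForm

variable {a ε : ℝ}

lemma hasDerivAt_exp_mul_sin_cos_div (hD : ε ^ 2 + a ^ 2 ≠ 0) (r : ℝ) :
    HasDerivAt
      (fun r => exp (-(ε * r)) * (a * sin (a * r) - ε * cos (a * r)) / (ε ^ 2 + a ^ 2))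
      (cos (a * r) * exp (-(ε * r))) r := by
  have hexp : HasDerivAt (fun r => exp (-(ε * r))) (exp (-(ε * r)) * -(ε * 1)) r :=
    ((hasDerivAt_id r).const_mul ε).neg.exp
  have hsin : HasDerivAt (fun r => sin (a * r)) (cos (a * r) * (a * 1)) r :=
    ((hasDerivAt_id r).const_mul a).sin
  have hcos : HasDerivAt (fun r => cos (a * r)) (-sin (a * r) * (a * 1)) r :=
    ((hasDerivAt_id r).const_mul a).cos
  refine ((hexp.mul ((hsin.const_mul a).sub (hcos.const_mul ε))).div_const _).congr_deriv ?_
  simp only [Pi.sub_apply]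
  field_simp
  ring

lemma tendsto_exp_mul_sin_cos_div_atTop (hε : 0 < ε) :
    Tendsto
      (fun r => exp (-(ε * r)) * (a * sin (a * r) - ε * cos (a * r)) / (ε ^ 2 + a ^ 2))
      atTop (𝓝 0) := by
  have hexp : Tendsto (fun r => exp (-(ε * r))) atTop (𝓝 0) :=
    tendsto_exp_neg_atTop_nhds_zero.comp (tendsto_id.const_mul_atTop hε)
  have hbdd : IsBoundedUnder (· ≤ ·) atTop
      fun r => ‖a * sin (a * r) - ε * cos (a * r)‖ := by
    refine isBoundedUnder_of ⟨|a| + |ε|, fun r => ?_⟩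
    calc ‖a * sin (a * r) - ε * cos (a * r)‖
        ≤ |a| * |sin (a * r)| + |ε| * |cos (a * r)| := by
          simpa only [Real.norm_eq_abs, abs_mul] using abs_sub (a * sin (a * r)) (ε * cos (a * r))
      _ ≤ |a| * 1 + |ε| * 1 := by
          gcongr
          exacts [abs_sin_le_one _, abs_cos_le_one _]
      _ = |a| + |ε| := by ring
  simpa using (hexp.zero_mul_isBoundedUnder_le hbdd).div_const (ε ^ 2 + a ^ 2)

lemma integrableOn_cos_mul_exp_neg_mul_Ioi (t : ℝ) (hε : 0 < ε) :
    IntegrableOn (fun r => cos (a * r) * exp (-(ε * r))) (Ioi t) :=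
  (show IntegrableOn (fun r => exp (-(ε * r))) (Ioi t) volume by
    simpa only [neg_mul] using exp_neg_integrableOn_Ioi t hε).bdd_mul (c := 1) (by fun_prop)
    (Eventually.of_forall fun r => by simpa using abs_cos_le_one (a * r))

theorem integral_Ioi_cos_mul_exp_neg_mul (t : ℝ) (hε : 0 < ε) :
    ∫ r in Ioi t, cos (a * r) * exp (-(ε * r))
      = exp (-(ε * t)) * ((ε * cos (a * t) - a * sin (a * t)) / (ε ^ 2 + a ^ 2)) := by
  have hD : ε ^ 2 + a ^ 2 ≠ 0 := by positivity
  rw [integral_Ioi_of_hasDerivAt_of_tendsto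
    (hasDerivAt_exp_mul_sin_cos_div hD t).continuousAt.continuousWithinAt
    (fun r _ => hasDerivAt_exp_mul_sin_cos_div hD r)
    (integrableOn_cos_mul_exp_neg_mul_Ioi t hε) (tendsto_exp_mul_sin_cos_div_atTop hε)]
  ring

end ClosedForm

section Pairing

variable {E : Type*} [NormedAddCommGroup E] [NormedSpace ℝ E]

lemma integral_div_sq_add_sq_smul_eq_integral_comp_mul (g : ℝ → E) {ε : ℝ} (hε : 0 < ε) :
    ∫ a, (ε / (ε ^ 2 + a ^ 2)) • g a = ∫ u, (1 + u ^ 2)⁻¹ • g (ε * u) := by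
  have hscale : ∀ u, (ε / (ε ^ 2 + (ε * u) ^ 2)) • g (ε * u)
      = ε⁻¹ • ((1 + u ^ 2)⁻¹ • g (ε * u)) := fun u => by
    rw [smul_smul]
    congr 1
    field_simp
  have := Measure.integral_comp_mul_left (fun a => (ε / (ε ^ 2 + a ^ 2)) • g a) ε
  simp only [hscale, integral_smul, abs_of_pos (inv_pos.mpr hε)] at this
  exact (smul_right_injective E (inv_ne_zero hε.ne') this).symm

theorem tendsto_integral_div_sq_add_sq_smul [CompleteSpace E] {g : ℝ → E} (hg : Continuous g)
    {C : ℝ} (hC : ∀ x, ‖g x‖ ≤ C) :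
    Tendsto (fun ε => ∫ a, (ε / (ε ^ 2 + a ^ 2)) • g a) (𝓝[>] 0) (𝓝 (π • g 0)) := by
  have hlim : Tendsto (fun ε => ∫ u, (1 + u ^ 2)⁻¹ • g (ε * u)) (𝓝 0)
      (𝓝 (∫ u : ℝ, (1 + u ^ 2)⁻¹ • g 0)) := by
    refine tendsto_integral_filter_of_dominated_convergence (fun u => (1 + u ^ 2)⁻¹ * C)
      (Eventually.of_forall fun ε => by fun_prop)
      (Eventually.of_forall fun ε => Eventually.of_forall fun u => ?_)
      (integrable_inv_one_add_sq.mul_const C) (Eventually.of_forall fun u => ?_)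
    · rw [norm_smul, Real.norm_of_nonneg (by positivity)]
      gcongr
      exact hC _
    · have : Tendsto (fun ε : ℝ => ε * u) (𝓝 0) (𝓝 0) := by
        simpa using (continuous_mul_const u).tendsto 0
      exact ((hg.tendsto 0).comp this).const_smul _
  rw [integral_smul_const, integral_univ_inv_one_add_sq] at hlim
  exact (hlim.mono_left nhdsWithin_le_nhds).congr'
    (eventually_nhdsWithin_of_forall fun ε hε =>
      (integral_div_sq_add_sq_smul_eq_integral_comp_mul g hε).symm)

lemma abs_mul_sin_div_sq_add_sq_le (t ε a : ℝ) :
    |a * sin (t * a) / (ε ^ 2 + a ^ 2)| ≤ |t| := by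
  rcases eq_or_ne a 0 with rfl | ha
  · simp
  have hD : 0 < ε ^ 2 + a ^ 2 := by have := sq_pos_of_ne_zero ha; positivity
  rw [abs_div, abs_of_pos hD, div_le_iff₀ hD]
  calc |a * sin (t * a)| ≤ |a| * |t * a| := by
        rw [abs_mul]
        exact mul_le_mul_of_nonneg_left abs_sin_le_abs (abs_nonneg a)
    _ = |t| * a ^ 2 := by rw [abs_mul, ← sq_abs a]; ring
    _ ≤ |t| * (ε ^ 2 + a ^ 2) := by gcongr; nlinarith [sq_nonneg ε]

theorem tendsto_integral_mul_sin_div_sq_add_sq_smul (t : ℝ) {g : ℝ → E} (hg : Integrable g) :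
    Tendsto (fun ε => ∫ a, (a * sin (t * a) / (ε ^ 2 + a ^ 2)) • g a) (𝓝 0)
      (𝓝 (∫ a, (sin (t * a) / a) • g a)) := by
  refine tendsto_integral_filter_of_dominated_convergence (fun a => |t| * ‖g a‖)
    (Eventually.of_forall fun ε =>
      (Measurable.aestronglyMeasurable (by fun_prop)).smul hg.aestronglyMeasurable)
    (Eventually.of_forall fun ε => Eventually.of_forall fun a => ?_)
    (hg.norm.const_mul |t|) (Eventually.of_forall fun a => ?_)
  · rw [norm_smul, Real.norm_eq_abs]
    exact mul_le_mul_of_nonneg_right (abs_mul_sin_div_sq_add_sq_le t ε a) (norm_nonneg _)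
  · rcases eq_or_ne a 0 with rfl | ha
    · simp -- both sides vanish, as `x / 0 = 0`
    have : Tendsto (fun ε : ℝ => a * sin (t * a) / (ε ^ 2 + a ^ 2)) (𝓝 0)
        (𝓝 (a * sin (t * a) / (0 ^ 2 + a ^ 2))) :=
      tendsto_const_nhds.div (((continuous_pow 2).add continuous_const).tendsto 0) (by simpa)
    convert this.smul_const (g a) using 3
    field_simp
    ring

lemma integral_integral_Ioi_cos_mul_exp_neg_mul_smul (t : ℝ) {g : ℝ → E} (hg : Integrable g)
    {ε : ℝ} (hε : 0 < ε) :
    ∫ a, (∫ r in Ioi t, cos (a * r) * exp (-(ε * r))) • g a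
      = exp (-(ε * t)) • ((∫ a, (ε / (ε ^ 2 + a ^ 2)) • (cos (a * t) • g a))
          - ∫ a, (a * sin (t * a) / (ε ^ 2 + a ^ 2)) • g a) := by
  have hD : ∀ a : ℝ, 0 < ε ^ 2 + a ^ 2 := fun a => by positivity
  have hkernel : ∀ a : ℝ, ‖ε / (ε ^ 2 + a ^ 2) * cos (a * t)‖ ≤ ε⁻¹ := fun a =>
    calc ‖ε / (ε ^ 2 + a ^ 2) * cos (a * t)‖ ≤ ε / (ε ^ 2 + a ^ 2) * 1 := by
          rw [norm_mul, Real.norm_of_nonneg (div_nonneg hε.le (hD a).le), Real.norm_eq_abs]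
          exact mul_le_mul_of_nonneg_left (abs_cos_le_one _) (div_nonneg hε.le (hD a).le)
      _ ≤ ε / ε ^ 2 := by
          rw [mul_one]
          exact div_le_div_of_nonneg_left hε.le (by positivity)
            (le_add_of_nonneg_right (sq_nonneg a))
      _ = ε⁻¹ := by field_simp
  have hpoisson : Integrable fun a => (ε / (ε ^ 2 + a ^ 2)) • (cos (a * t) • g a) := by
    simp_rw [smul_smul]
    exact hg.bdd_smul (φ := fun a => ε / (ε ^ 2 + a ^ 2) * cos (a * t)) ε⁻¹ (by fun_prop)
      (Eventually.of_forall hkernel)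
  have hsin : Integrable fun a => (a * sin (t * a) / (ε ^ 2 + a ^ 2)) • g a :=
    hg.bdd_smul (φ := fun a => a * sin (t * a) / (ε ^ 2 + a ^ 2)) |t|
      (Measurable.aestronglyMeasurable (by fun_prop))
      (Eventually.of_forall (abs_mul_sin_div_sq_add_sq_le t ε))
  rw [← integral_sub hpoisson hsin, ← integral_smul]
  refine integral_congr_ae (Eventually.of_forall fun a => ?_)
  simp only [integral_Ioi_cos_mul_exp_neg_mul t hε, smul_smul, ← sub_smul]
  congr 1
  rw [mul_comm t a]
  field_simp

end Pairing

/-- In the sense of tempered distributions in `a`,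
`lim_{ε→0⁺} ∫_t^∞ cos(ar) e^{−εr} dr = π δ₀(a) − sin(ta)/a`:
pairing with any Schwartz function `φ` and letting `ε → 0⁺` yields
`π φ(0) − ∫ (sin(ta)/a) φ(a) da`. -/
theorem cos_exp_tail_distributional_limit (t : ℝ) (φ : SchwartzMap ℝ ℂ) :
    Tendsto (fun ε : ℝ =>
        ∫ a : ℝ, (∫ r in Ioi t, Real.cos (a * r) * Real.exp (-(ε * r))) • φ a)
      (𝓝[>] 0)
      (𝓝 ((Real.pi : ℂ) * φ 0 - ∫ a : ℝ, ((Real.sin (t * a) / a : ℝ) : ℂ) * φ a)) := by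
  have hbound : ∀ a, ‖cos (a * t) • φ a‖ ≤ SchwartzMap.seminorm ℝ 0 0 φ := fun a => by
    rw [norm_smul, Real.norm_eq_abs]
    exact (mul_le_of_le_one_left (norm_nonneg _) (abs_cos_le_one _)).trans
      (φ.norm_le_seminorm ℝ a)
  have hexp : Tendsto (fun ε : ℝ => exp (-(ε * t))) (𝓝[>] 0) (𝓝 1) := by
    simpa using ((by fun_prop : Continuous fun ε : ℝ => exp (-(ε * t))).tendsto 0).mono_left
      nhdsWithin_le_nhds
  have hlim := hexp.smul ((tendsto_integral_div_sq_add_sq_smul (by fun_prop) hbound).sub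
    ((tendsto_integral_mul_sin_div_sq_add_sq_smul t φ.integrable).mono_left nhdsWithin_le_nhds))
  have hvalue : (π : ℂ) * φ 0 - ∫ a : ℝ, ((sin (t * a) / a : ℝ) : ℂ) * φ a
      = (1 : ℝ) • (π • cos (0 * t) • φ 0 - ∫ a, (sin (t * a) / a) • φ a) := by
    simp [Complex.real_smul]
  rw [hvalue]
  exact hlim.congr' (eventually_nhdsWithin_of_forall fun ε hε =>
    (integral_integral_Ioi_cos_mul_exp_neg_mul_smul t φ.integrable hε).symm)
end

section
/- For any a ≠ 0 and t ∈ ℝ, the limit as ε → 0⁺ of ∫_t^∞ sin(ar) e^{−εr} dr equals cos(ta)/a. -/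
/-!
For `ε > 0` the integral has the explicit primitive `primitive a ε`, which vanishes at `+∞`,
so it equals `-primitive a ε t`. This closed form is continuous in `ε` at `0` as soon as
`a ≠ 0`, and its value there is `cos (t a) / a`.
-/

open MeasureTheory Filter Set Topology

noncomputable section

namespace SinExp

open Real

def primitive (a ε r : ℝ) : ℝ :=
  -(exp (-(ε * r)) * (ε * sin (a * r) + a * cos (a * r))) / (ε ^ 2 + a ^ 2)

theorem hasDerivAt_primitive {a ε : ℝ} (h : ε ^ 2 + a ^ 2 ≠ 0) (x : ℝ) :
    HasDerivAt (primitive a ε) (sin (a * x) * exp (-(ε * x))) x := by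
  have hexp : HasDerivAt (fun r => exp (-(ε * r))) (-ε * exp (-(ε * x))) x := by
    simpa [neg_mul, mul_comm] using ((hasDerivAt_id x).const_mul (-ε)).exp
  have hlin : HasDerivAt (fun r => a * r) a x := by simpa using (hasDerivAt_id x).const_mul a
  have htrig : HasDerivAt (fun r => ε * sin (a * r) + a * cos (a * r))
      (ε * (cos (a * x) * a) + a * (-sin (a * x) * a)) x :=
    (((hasDerivAt_sin _).comp x hlin).const_mul ε).add (((hasDerivAt_cos _).comp x hlin).const_mul a)
  refine ((hexp.mul htrig).neg.div_const _).congr_deriv ?_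
  field_simp
  ring

theorem abs_mul_sin_add_mul_cos_le (ε a x : ℝ) : |ε * sin x + a * cos x| ≤ |ε| + |a| :=
  calc |ε * sin x + a * cos x| ≤ |ε| * |sin x| + |a| * |cos x| := by
        simpa only [abs_mul] using abs_add_le (ε * sin x) (a * cos x)
    _ ≤ |ε| * 1 + |a| * 1 := by gcongr <;> simp [abs_sin_le_one, abs_cos_le_one]
    _ = |ε| + |a| := by ring

theorem tendsto_primitive_atTop (a : ℝ) {ε : ℝ} (hε : 0 < ε) :
    Tendsto (primitive a ε) atTop (𝓝 0) := by
  have hexp : Tendsto (fun r => exp (-(ε * r))) atTop (𝓝 0) :=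
    tendsto_exp_atBot.comp (tendsto_neg_atTop_atBot.comp (tendsto_id.const_mul_atTop hε))
  have hbdd : IsBoundedUnder (· ≤ ·) atTop
      ((‖·‖) ∘ fun r => ε * sin (a * r) + a * cos (a * r)) :=
    isBoundedUnder_of ⟨|ε| + |a|, fun r => abs_mul_sin_add_mul_cos_le ε a (a * r)⟩
  rw [show (0 : ℝ) = -0 / (ε ^ 2 + a ^ 2) by simp]
  exact ((hexp.zero_mul_isBoundedUnder_le hbdd).neg).div_const (ε ^ 2 + a ^ 2)

theorem integrableOn_sin_mul_exp_neg_Ioi (a t : ℝ) {ε : ℝ} (hε : 0 < ε) :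
    IntegrableOn (fun r => sin (a * r) * exp (-(ε * r))) (Ioi t) := by
  have hexp : IntegrableOn (fun r => exp (-(ε * r))) (Ioi t) := by
    simpa only [neg_mul] using exp_neg_integrableOn_Ioi t hε
  exact hexp.bdd_mul (c := 1) (by fun_prop) (ae_of_all _ fun r => abs_sin_le_one _)

theorem integral_Ioi_sin_mul_exp_neg (a t : ℝ) {ε : ℝ} (hε : 0 < ε) :
    ∫ r in Ioi t, sin (a * r) * exp (-(ε * r)) = -primitive a ε t := by
  rw [integral_Ioi_of_hasDerivAt_of_tendsto' (fun x _ => hasDerivAt_primitive (by positivity) x)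
    (integrableOn_sin_mul_exp_neg_Ioi a t hε) (tendsto_primitive_atTop a hε), zero_sub]

theorem continuousAt_primitive_zero (a t : ℝ) (ha : a ≠ 0) :
    ContinuousAt (fun ε => primitive a ε t) 0 := by
  unfold primitive
  exact ContinuousAt.div (by fun_prop) (by fun_prop) (by simpa using ha)

end SinExp

open SinExp in
/-- For `a ≠ 0` and any `t`, `lim_{ε→0⁺} ∫_t^∞ sin(ar) e^{−εr} dr = cos(ta)/a`. -/
theorem sin_exp_tail_limit (a t : ℝ) (ha : a ≠ 0) :
    Tendsto (fun ε : ℝ => ∫ r in Ioi t, Real.sin (a * r) * Real.exp (-(ε * r)))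
      (𝓝[>] 0) (𝓝 (Real.cos (t * a) / a)) := by
  have hlim : -primitive a 0 t = Real.cos (t * a) / a := by
    simp [primitive, mul_comm t a]
    field_simp
  rw [← hlim]
  refine ((continuousAt_primitive_zero a t ha).neg.continuousWithinAt).tendsto.congr' ?_
  filter_upwards [self_mem_nhdsWithin] with ε hε
  exact (integral_Ioi_sin_mul_exp_neg a t hε).symm
end
end

section
/- For φ, ψ Schwartz functions on ℝ compactly supported in (0,∞), the double integral ∫₀^∞∫₀^∞ [cos(2t(ρ₁−ρ₂))/(ρ₁−ρ₂)] (φ(ρ₁)conj(ψ(ρ₂)) − ψ(ρ₁)conj(φ(ρ₂))) dρ₁dρ₂ (principal value) converges to 0 as t → +∞. -/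
open MeasureTheory Filter Set Topology

open FourierTransform

noncomputable section

/-- For `φ, ψ` smooth, compactly supported in `(0,∞)`, the principal-value double integral
`p.v. ∫∫ cos(2t(ρ₁−ρ₂))/(ρ₁−ρ₂) (φ(ρ₁)ψ̄(ρ₂) − ψ(ρ₁)φ̄(ρ₂)) dρ₁dρ₂` tends to `0` as
`t → +∞`: for every `ε > 0` there is `T` such that for all `t ≥ T` the truncated integrals
(removing a `δ`-neighbourhood of the diagonal) are eventually `< ε` as `δ → 0⁺`. -/
theorem pv_cos_antisymmetric_vanishes
    (φ ψ : ℝ → ℂ) (hφ : ContDiff ℝ (⊤ : ℕ∞) φ) (hψ : ContDiff ℝ (⊤ : ℕ∞) ψ)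
    (hφc : HasCompactSupport φ) (hψc : HasCompactSupport ψ)
    (hφs : tsupport φ ⊆ Ioi (0:ℝ)) (hψs : tsupport ψ ⊆ Ioi (0:ℝ)) :
    ∀ ε > (0:ℝ), ∃ T : ℝ, ∀ t ≥ T,
      ∀ᶠ δ in 𝓝[>] (0:ℝ),
        ‖∫ ρ₁ in Ioi (0:ℝ), ∫ ρ₂ in Ioi (0:ℝ),
            (if δ < |ρ₁ - ρ₂| then
              ((Real.cos (2 * t * (ρ₁ - ρ₂)) / (ρ₁ - ρ₂) : ℝ) : ℂ) *
                (φ ρ₁ * (starRingEnd ℂ) (ψ ρ₂) - ψ ρ₁ * (starRingEnd ℂ) (φ ρ₂))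
             else 0)‖ < ε := by
  have hφct : Continuous φ := hφ.continuous
  have hψct : Continuous ψ := hψ.continuous
  -- uniform bounds
  obtain ⟨Cφ, hCφ0, hCφ⟩ : ∃ C : ℝ, 0 < C ∧ ∀ x, ‖φ x‖ ≤ C := by
    obtain ⟨C, hC⟩ := hφc.exists_bound_of_continuous hφct
    exact ⟨max C 1, lt_of_lt_of_le one_pos (le_max_right _ _),
      fun x => (hC x).trans (le_max_left _ _)⟩
  obtain ⟨Cψ, hCψ0, hCψ⟩ : ∃ C : ℝ, 0 < C ∧ ∀ x, ‖ψ x‖ ≤ C := by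
    obtain ⟨C, hC⟩ := hψc.exists_bound_of_continuous hψct
    exact ⟨max C 1, lt_of_lt_of_le one_pos (le_max_right _ _),
      fun x => (hC x).trans (le_max_left _ _)⟩
  -- Lipschitz bounds
  obtain ⟨Lφ, hLφ⟩ := ContDiff.lipschitzWith_of_hasCompactSupport hφc hφ (by simp)
  obtain ⟨Lψ, hLψ⟩ := ContDiff.lipschitzWith_of_hasCompactSupport hψc hψ (by simp)
  have hLφ' : ∀ x y : ℝ, ‖φ x - φ y‖ ≤ (Lφ : ℝ) * |x - y| := by
    intro x y
    have := hLφ.dist_le_mul x y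
    rwa [dist_eq_norm, Real.dist_eq] at this
  have hLψ' : ∀ x y : ℝ, ‖ψ x - ψ y‖ ≤ (Lψ : ℝ) * |x - y| := by
    intro x y
    have := hLψ.dist_le_mul x y
    rwa [dist_eq_norm, Real.dist_eq] at this
  -- support sets
  set K : Set ℝ := tsupport φ ∪ tsupport ψ with hKdef
  have hK : IsCompact K := hφc.union hψc
  set S : Set (ℝ × ℝ) := K ×ˢ K with hSdef
  have hSm : MeasurableSet S :=
    (hK.isClosed.measurableSet).prod (hK.isClosed.measurableSet)
  have hSfin : volume S < ⊤ := (hK.prod hK).measure_lt_top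
  have hφ0 : ∀ x, x ∉ K → φ x = 0 := fun x hx =>
    image_eq_zero_of_notMem_tsupport (fun h => hx (Or.inl h))
  have hψ0 : ∀ x, x ∉ K → ψ x = 0 := fun x hx =>
    image_eq_zero_of_notMem_tsupport (fun h => hx (Or.inr h))
  -- the bilinear bracket
  set B : ℝ × ℝ → ℂ := fun p =>
    φ p.1 * (starRingEnd ℂ) (ψ p.2) - ψ p.1 * (starRingEnd ℂ) (φ p.2) with hBdef
  have hBcont : Continuous B := by
    apply Continuous.sub
    · exact (hφct.comp continuous_fst).mul
        (Complex.continuous_conj.comp (hψct.comp continuous_snd))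
    · exact (hψct.comp continuous_fst).mul
        (Complex.continuous_conj.comp (hφct.comp continuous_snd))
  have hBsupp : ∀ p : ℝ × ℝ, p ∉ S → B p = 0 := by
    rintro ⟨x, y⟩ hp
    rw [hSdef, Set.mem_prod] at hp
    push_neg at hp
    by_cases hx : x ∈ K
    · have hy := hp hx
      simp [hBdef, hφ0 y hy, hψ0 y hy]
    · simp [hBdef, hφ0 x hx, hψ0 x hx]
  set h : ℝ × ℝ → ℝ := fun p => (B p).re with hhdef
  have hhcont : Continuous h := Complex.continuous_re.comp hBcont
  -- the crucial Lipschitz-type bound on h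
  set L : ℝ := (Lφ : ℝ) * Cψ + (Lψ : ℝ) * Cφ with hLdef
  have hL0 : 0 ≤ L := by positivity
  have hdiagre : ∀ x y : ℝ, (φ y * (starRingEnd ℂ) (ψ y) - ψ y * (starRingEnd ℂ) (φ y)).re = 0 := by
    intro x y
    have : ψ y * (starRingEnd ℂ) (φ y) = (starRingEnd ℂ) (φ y * (starRingEnd ℂ) (ψ y)) := by
      rw [map_mul, Complex.conj_conj]; ring
    rw [Complex.sub_re, this, Complex.conj_re, sub_self]
  have hhb : ∀ p : ℝ × ℝ, |h p| ≤ L * |p.1 - p.2| := by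
    rintro ⟨x, y⟩
    have e : B (x, y) = (φ x - φ y) * (starRingEnd ℂ) (ψ y)
        - (ψ x - ψ y) * (starRingEnd ℂ) (φ y)
        + (φ y * (starRingEnd ℂ) (ψ y) - ψ y * (starRingEnd ℂ) (φ y)) := by
      rw [hBdef]; ring
    have hre : h (x, y) = ((φ x - φ y) * (starRingEnd ℂ) (ψ y)).re
        - ((ψ x - ψ y) * (starRingEnd ℂ) (φ y)).re := by
      rw [hhdef]
      simp only [e, Complex.add_re, Complex.sub_re, hdiagre x y]
      ring
    rw [hre]
    have b1 : |((φ x - φ y) * (starRingEnd ℂ) (ψ y)).re| ≤ (Lφ : ℝ) * |x - y| * Cψ := by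
      refine (Complex.abs_re_le_norm _).trans ?_
      rw [norm_mul, RCLike.norm_conj]
      exact mul_le_mul (hLφ' x y) (hCψ y) (norm_nonneg _) (by positivity)
    have b2 : |((ψ x - ψ y) * (starRingEnd ℂ) (φ y)).re| ≤ (Lψ : ℝ) * |x - y| * Cφ := by
      refine (Complex.abs_re_le_norm _).trans ?_
      rw [norm_mul, RCLike.norm_conj]
      exact mul_le_mul (hLψ' x y) (hCφ y) (norm_nonneg _) (by positivity)
    calc |((φ x - φ y) * (starRingEnd ℂ) (ψ y)).re
        - ((ψ x - ψ y) * (starRingEnd ℂ) (φ y)).re|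
        ≤ |((φ x - φ y) * (starRingEnd ℂ) (ψ y)).re|
          + |((ψ x - ψ y) * (starRingEnd ℂ) (φ y)).re| := abs_sub _ _
      _ ≤ (Lφ : ℝ) * |x - y| * Cψ + (Lψ : ℝ) * |x - y| * Cφ := add_le_add b1 b2
      _ = L * |(x, y).1 - (x, y).2| := by rw [hLdef]; ring
  -- the complex truncated integrand, and its real symmetrization
  set Fc : ℝ → ℝ → ℝ × ℝ → ℂ := fun t δ p =>
    if δ < |p.1 - p.2| then
      ((Real.cos (2 * t * (p.1 - p.2)) / (p.1 - p.2) : ℝ) : ℂ) * B p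
    else 0 with hFcdef
  set Fr : ℝ → ℝ → ℝ × ℝ → ℝ := fun t δ p =>
    if δ < |p.1 - p.2| then Real.cos (2 * t * (p.1 - p.2)) / (p.1 - p.2) * h p
    else 0 with hFrdef
  set g : ℝ × ℝ → ℝ := fun p => if p.1 = p.2 then 0 else h p / (p.1 - p.2) with hgdef
  set G : ℝ → ℝ × ℝ → ℝ := fun t p => Real.cos (2 * t * (p.1 - p.2)) * g p with hGdef
  -- measurability
  have hcond : ∀ δ : ℝ, MeasurableSet {p : ℝ × ℝ | δ < |p.1 - p.2|} :=
    fun δ => measurableSet_lt measurable_const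
      ((continuous_fst.sub continuous_snd).abs.measurable)
  have hFcm : ∀ t δ, Measurable (Fc t δ) := by
    intro t δ
    apply Measurable.ite (hcond δ) _ measurable_const
    apply Measurable.mul _ hBcont.measurable
    apply Complex.measurable_ofReal.comp
    exact ((Real.continuous_cos.comp
      ((continuous_const.mul (continuous_fst.sub continuous_snd)))).measurable).div
      (measurable_fst.sub measurable_snd)
  have hFrm : ∀ t δ, Measurable (Fr t δ) := by
    intro t δ
    apply Measurable.ite (hcond δ) _ measurable_const
    exact (((Real.continuous_cos.comp
      ((continuous_const.mul (continuous_fst.sub continuous_snd)))).measurable).div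
      (measurable_fst.sub measurable_snd)).mul hhcont.measurable
  have hgm : Measurable g := by
    apply Measurable.ite (measurableSet_eq_fun measurable_fst measurable_snd) measurable_const
    exact hhcont.measurable.div (measurable_fst.sub measurable_snd)
  have hGm : ∀ t, Measurable (G t) := by
    intro t
    exact ((Real.continuous_cos.comp
      ((continuous_const.mul (continuous_fst.sub continuous_snd)))).measurable).mul hgm
  -- bounds
  have hnormB : ∀ p : ℝ × ℝ, ‖B p‖ ≤ 2 * Cφ * Cψ := by
    rintro ⟨x, y⟩
    calc ‖B (x, y)‖ ≤ ‖φ x * (starRingEnd ℂ) (ψ y)‖ + ‖ψ x * (starRingEnd ℂ) (φ y)‖ :=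
          norm_sub_le _ _
      _ ≤ Cφ * Cψ + Cψ * Cφ := by
          apply add_le_add
          · rw [norm_mul, RCLike.norm_conj]
            exact mul_le_mul (hCφ x) (hCψ y) (norm_nonneg _) hCφ0.le
          · rw [norm_mul, RCLike.norm_conj]
            exact mul_le_mul (hCψ x) (hCφ y) (norm_nonneg _) hCψ0.le
      _ = 2 * Cφ * Cψ := by ring
  have hh0 : ∀ p : ℝ × ℝ, p ∉ S → h p = 0 := by
    intro p hp; simp only [hhdef, hBsupp p hp, Complex.zero_re]
  have hFc_bound : ∀ t : ℝ, ∀ δ : ℝ, 0 < δ → ∀ p : ℝ × ℝ,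
      ‖Fc t δ p‖ ≤ S.indicator (fun _ => 2 * Cφ * Cψ / δ) p := by
    intro t δ hδ p
    by_cases hp : p ∈ S
    · rw [Set.indicator_of_mem hp]
      simp only [hFcdef]
      by_cases hc : δ < |p.1 - p.2|
      · rw [if_pos hc]
        have hu : δ ≤ |p.1 - p.2| := hc.le
        have hu0 : (0:ℝ) < |p.1 - p.2| := lt_trans hδ hc
        rw [norm_mul, Complex.norm_real]
        have h1 : |Real.cos (2 * t * (p.1 - p.2)) / (p.1 - p.2)| ≤ 1 / δ := by
          rw [abs_div]
          apply div_le_div₀ (by positivity) (Real.abs_cos_le_one _) hδ hu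
        calc |Real.cos (2 * t * (p.1 - p.2)) / (p.1 - p.2)| * ‖B p‖
            ≤ (1 / δ) * (2 * Cφ * Cψ) :=
              mul_le_mul h1 (hnormB p) (norm_nonneg _) (by positivity)
          _ = 2 * Cφ * Cψ / δ := by ring
      · rw [if_neg hc]; simp; positivity
    · rw [Set.indicator_of_notMem hp]
      simp only [hFcdef]
      by_cases hc : δ < |p.1 - p.2|
      · rw [if_pos hc, hBsupp p hp, mul_zero, norm_zero]
      · rw [if_neg hc, norm_zero]
  have hFr_bound : ∀ t : ℝ, ∀ δ : ℝ, 0 < δ → ∀ p : ℝ × ℝ,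
      ‖Fr t δ p‖ ≤ S.indicator (fun _ => L) p := by
    intro t δ hδ p
    by_cases hp : p ∈ S
    · rw [Set.indicator_of_mem hp]
      simp only [hFrdef]
      by_cases hc : δ < |p.1 - p.2|
      · rw [if_pos hc]
        have hu0 : (0:ℝ) < |p.1 - p.2| := lt_trans hδ hc
        rw [Real.norm_eq_abs, abs_mul, abs_div]
        calc |Real.cos (2 * t * (p.1 - p.2))| / |p.1 - p.2| * |h p|
            ≤ 1 / |p.1 - p.2| * (L * |p.1 - p.2|) := by
              exact mul_le_mul (div_le_div₀ zero_le_one (Real.abs_cos_le_one _) hu0 le_rfl)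
                (hhb p) (abs_nonneg _) (by positivity)
          _ = L := by field_simp
      · rw [if_neg hc, norm_zero]; exact hL0
    · rw [Set.indicator_of_notMem hp]
      simp only [hFrdef]
      by_cases hc : δ < |p.1 - p.2|
      · rw [if_pos hc, hh0 p hp, mul_zero, norm_zero]
      · rw [if_neg hc, norm_zero]
  -- integrability facts
  have hDom_int : Integrable (S.indicator fun _ => L) := by
    rw [integrable_indicator_iff hSm]
    exact integrableOn_const hSfin.ne
  have hDom2_int : ∀ δ : ℝ, Integrable (S.indicator fun _ : ℝ × ℝ => 2 * Cφ * Cψ / δ) := by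
    intro δ
    rw [integrable_indicator_iff hSm]
    exact integrableOn_const hSfin.ne
  have hFcint : ∀ t δ : ℝ, 0 < δ → Integrable (Fc t δ) := fun t δ hδ =>
    Integrable.mono' (hDom2_int δ) (hFcm t δ).aestronglyMeasurable
      (Eventually.of_forall (hFc_bound t δ hδ))
  have hFrint : ∀ t δ : ℝ, 0 < δ → Integrable (Fr t δ) := fun t δ hδ =>
    Integrable.mono' hDom_int (hFrm t δ).aestronglyMeasurable
      (Eventually.of_forall (hFr_bound t δ hδ))
  have hg_bound : ∀ p : ℝ × ℝ, ‖g p‖ ≤ S.indicator (fun _ => L) p := by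
    intro p
    by_cases hp : p ∈ S
    · rw [Set.indicator_of_mem hp]
      simp only [hgdef]
      by_cases hd : p.1 = p.2
      · rw [if_pos hd, norm_zero]; exact hL0
      · rw [if_neg hd]
        have hpos : 0 < |p.1 - p.2| := abs_pos.mpr (sub_ne_zero.mpr hd)
        rw [Real.norm_eq_abs, abs_div]
        rw [div_le_iff₀ hpos]
        exact hhb p
    · rw [Set.indicator_of_notMem hp]
      simp only [hgdef, hh0 p hp]
      by_cases hd : p.1 = p.2
      · rw [if_pos hd, norm_zero]
      · rw [if_neg hd, zero_div, norm_zero]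
  have hG_bound : ∀ t : ℝ, ∀ p : ℝ × ℝ, ‖G t p‖ ≤ S.indicator (fun _ => L) p := by
    intro t p
    simp only [hGdef]
    rw [Real.norm_eq_abs, abs_mul]
    calc |Real.cos (2 * t * (p.1 - p.2))| * |g p| ≤ 1 * |g p| :=
          mul_le_mul_of_nonneg_right (Real.abs_cos_le_one _) (abs_nonneg _)
      _ = ‖g p‖ := by rw [one_mul, Real.norm_eq_abs]
      _ ≤ S.indicator (fun _ => L) p := hg_bound p
  have hGint : ∀ t : ℝ, Integrable (G t) := fun t =>
    Integrable.mono' hDom_int (hGm t).aestronglyMeasurable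
      (Eventually.of_forall (hG_bound t))
  -- the key identity: the iterated truncated integral is the real symmetrized integral
  have key : ∀ t δ : ℝ, 0 < δ →
      (∫ ρ₁ in Ioi (0:ℝ), ∫ ρ₂ in Ioi (0:ℝ),
          (if δ < |ρ₁ - ρ₂| then
            ((Real.cos (2 * t * (ρ₁ - ρ₂)) / (ρ₁ - ρ₂) : ℝ) : ℂ) *
              (φ ρ₁ * (starRingEnd ℂ) (ψ ρ₂) - ψ ρ₁ * (starRingEnd ℂ) (φ ρ₂))
           else 0))
      = ((∫ p, Fr t δ p : ℝ) : ℂ) := by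
    intro t δ hδ
    have hzero : ∀ ρ : ℝ, ρ ∉ Ioi (0:ℝ) → φ ρ = 0 ∧ ψ ρ = 0 := fun ρ hρ =>
      ⟨image_eq_zero_of_notMem_tsupport fun hm => hρ (hφs hm),
       image_eq_zero_of_notMem_tsupport fun hm => hρ (hψs hm)⟩
    have step1 : (∫ ρ₁ in Ioi (0:ℝ), ∫ ρ₂ in Ioi (0:ℝ),
        (if δ < |ρ₁ - ρ₂| then
          ((Real.cos (2 * t * (ρ₁ - ρ₂)) / (ρ₁ - ρ₂) : ℝ) : ℂ) *
            (φ ρ₁ * (starRingEnd ℂ) (ψ ρ₂) - ψ ρ₁ * (starRingEnd ℂ) (φ ρ₂))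
         else 0)) = ∫ p, Fc t δ p := by
      have inner_eq : ∀ ρ₁ : ℝ, (∫ ρ₂ in Ioi (0:ℝ),
          (if δ < |ρ₁ - ρ₂| then
            ((Real.cos (2 * t * (ρ₁ - ρ₂)) / (ρ₁ - ρ₂) : ℝ) : ℂ) *
              (φ ρ₁ * (starRingEnd ℂ) (ψ ρ₂) - ψ ρ₁ * (starRingEnd ℂ) (φ ρ₂))
           else 0)) = ∫ ρ₂ : ℝ,
          (if δ < |ρ₁ - ρ₂| then
            ((Real.cos (2 * t * (ρ₁ - ρ₂)) / (ρ₁ - ρ₂) : ℝ) : ℂ) *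
              (φ ρ₁ * (starRingEnd ℂ) (ψ ρ₂) - ψ ρ₁ * (starRingEnd ℂ) (φ ρ₂))
           else 0) := by
        intro ρ₁
        apply setIntegral_eq_integral_of_forall_compl_eq_zero
        intro ρ₂ hρ₂
        obtain ⟨h1, h2⟩ := hzero ρ₂ hρ₂
        simp [h1, h2]
      calc (∫ ρ₁ in Ioi (0:ℝ), ∫ ρ₂ in Ioi (0:ℝ),
          (if δ < |ρ₁ - ρ₂| then
            ((Real.cos (2 * t * (ρ₁ - ρ₂)) / (ρ₁ - ρ₂) : ℝ) : ℂ) *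
              (φ ρ₁ * (starRingEnd ℂ) (ψ ρ₂) - ψ ρ₁ * (starRingEnd ℂ) (φ ρ₂))
           else 0))
          = ∫ ρ₁ in Ioi (0:ℝ), ∫ ρ₂ : ℝ,
            (if δ < |ρ₁ - ρ₂| then
              ((Real.cos (2 * t * (ρ₁ - ρ₂)) / (ρ₁ - ρ₂) : ℝ) : ℂ) *
                (φ ρ₁ * (starRingEnd ℂ) (ψ ρ₂) - ψ ρ₁ * (starRingEnd ℂ) (φ ρ₂))
             else 0) := integral_congr_ae (ae_of_all _ inner_eq)
        _ = ∫ ρ₁ : ℝ, ∫ ρ₂ : ℝ,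
            (if δ < |ρ₁ - ρ₂| then
              ((Real.cos (2 * t * (ρ₁ - ρ₂)) / (ρ₁ - ρ₂) : ℝ) : ℂ) *
                (φ ρ₁ * (starRingEnd ℂ) (ψ ρ₂) - ψ ρ₁ * (starRingEnd ℂ) (φ ρ₂))
             else 0) := by
            apply setIntegral_eq_integral_of_forall_compl_eq_zero
            intro ρ₁ hρ₁
            obtain ⟨h1, h2⟩ := hzero ρ₁ hρ₁
            simp [h1, h2]
        _ = ∫ p, Fc t δ p := by
            rw [MeasureTheory.integral_integral
              (f := fun ρ₁ ρ₂ => (if δ < |ρ₁ - ρ₂| then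
                ((Real.cos (2 * t * (ρ₁ - ρ₂)) / (ρ₁ - ρ₂) : ℝ) : ℂ) *
                  (φ ρ₁ * (starRingEnd ℂ) (ψ ρ₂) - ψ ρ₁ * (starRingEnd ℂ) (φ ρ₂))
               else 0))
              (by rw [← Measure.volume_eq_prod ℝ ℝ]; exact hFcint t δ hδ)]
            rw [← Measure.volume_eq_prod ℝ ℝ]
    have swapid : ∀ p : ℝ × ℝ, Fc t δ p.swap = (starRingEnd ℂ) (Fc t δ p) := by
      rintro ⟨x, y⟩
      simp only [hFcdef, Prod.swap_prod_mk]
      by_cases hc : δ < |x - y|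
      · rw [if_pos (by rwa [abs_sub_comm] : δ < |y - x|), if_pos hc]
        rw [map_mul, Complex.conj_ofReal]
        have hB : (starRingEnd ℂ) (B (x, y)) = -B (y, x) := by
          simp only [hBdef]
          rw [map_sub, map_mul, map_mul, Complex.conj_conj, Complex.conj_conj]
          ring
        rw [hB]
        have hcos : Real.cos (2 * t * (y - x)) = Real.cos (2 * t * (x - y)) := by
          rw [show 2 * t * (y - x) = -(2 * t * (x - y)) by ring, Real.cos_neg]
        rw [hcos]
        have hdivneg : ((Real.cos (2 * t * (x - y)) / (y - x) : ℝ) : ℂ)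
            = -((Real.cos (2 * t * (x - y)) / (x - y) : ℝ) : ℂ) := by
          rw [← Complex.ofReal_neg]
          congr 1
          rw [show (y - x : ℝ) = -(x - y) by ring, div_neg]
        rw [hdivneg]
        ring
      · rw [if_neg (by rwa [abs_sub_comm] : ¬ δ < |y - x|), if_neg hc, map_zero]
    have e1 : (starRingEnd ℂ) (∫ p, Fc t δ p) = ∫ p, Fc t δ p := by
      conv_rhs => rw [Measure.volume_eq_prod ℝ ℝ]
      rw [← MeasureTheory.integral_prod_swap (Fc t δ)]
      calc (starRingEnd ℂ) (∫ p, Fc t δ p)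
          = (starRingEnd ℂ) (∫ p : ℝ × ℝ, Fc t δ p ∂((volume : Measure ℝ).prod volume)) := by
            rw [← Measure.volume_eq_prod ℝ ℝ]
        _ = ∫ p : ℝ × ℝ, (starRingEnd ℂ) (Fc t δ p) ∂((volume : Measure ℝ).prod volume) :=
            integral_conj.symm
        _ = ∫ p : ℝ × ℝ, Fc t δ p.swap ∂((volume : Measure ℝ).prod volume) := by
            apply integral_congr_ae
            exact ae_of_all _ fun p => (swapid p).symm
    have e2 : ∫ p, Fc t δ p = (((∫ p, Fc t δ p).re : ℝ) : ℂ) :=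
      (Complex.conj_eq_iff_re.mp e1).symm
    have e3 : (∫ p, Fc t δ p).re = ∫ p, Fr t δ p := by
      have hre := integral_re (hFcint t δ hδ)
      rw [← RCLike.re_to_complex, ← hre]
      apply integral_congr_ae
      refine ae_of_all _ fun p => ?_
      simp only [hFcdef, hFrdef, hhdef, RCLike.re_to_complex]
      by_cases hc : δ < |p.1 - p.2|
      · rw [if_pos hc, if_pos hc, Complex.re_ofReal_mul]
      · rw [if_neg hc, if_neg hc, Complex.zero_re]
    rw [step1, e2, e3]
  -- the diagonal is null
  have hdiagnull : (volume : Measure (ℝ × ℝ)) {p : ℝ × ℝ | p.1 = p.2} = 0 := by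
    rw [Measure.volume_eq_prod ℝ ℝ]
    have hms : MeasurableSet {p : ℝ × ℝ | p.1 = p.2} :=
      measurableSet_eq_fun measurable_fst measurable_snd
    rw [MeasureTheory.Measure.measure_prod_null hms]
    refine ae_of_all _ fun x => ?_
    have : (Prod.mk x ⁻¹' {p : ℝ × ℝ | p.1 = p.2}) = {x} := by
      ext y
      simp [eq_comm]
    simp [this]
  -- dominated convergence as δ → 0⁺
  have hDCT : ∀ t : ℝ, Tendsto (fun δ => ∫ p, Fr t δ p) (𝓝[>] (0:ℝ)) (𝓝 (∫ p, G t p)) := by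
    intro t
    apply tendsto_integral_filter_of_dominated_convergence (S.indicator fun _ => L)
    · exact Eventually.of_forall fun δ => (hFrm t δ).aestronglyMeasurable
    · filter_upwards [self_mem_nhdsWithin] with δ hδ
      exact Eventually.of_forall (hFr_bound t δ hδ)
    · exact hDom_int
    · have hne : ∀ᵐ p : ℝ × ℝ, p.1 ≠ p.2 := by
        rw [ae_iff]
        simpa using hdiagnull
      filter_upwards [hne] with p hp
      have hpos : 0 < |p.1 - p.2| := abs_pos.mpr (sub_ne_zero.mpr hp)
      have hev : ∀ᶠ δ in 𝓝[>] (0:ℝ), Fr t δ p = G t p := by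
        filter_upwards [Ioo_mem_nhdsGT_of_mem (⟨le_refl (0:ℝ), hpos⟩ : (0:ℝ) ∈ Ico 0 |p.1 - p.2|)]
          with δ hδ
        simp only [hFrdef, hGdef, hgdef]
        rw [if_pos hδ.2, if_neg hp]
        rw [div_mul_eq_mul_div, mul_div_assoc]
      exact Tendsto.congr' (hev.mono fun δ hδ => hδ.symm) tendsto_const_nhds
  -- Riemann-Lebesgue: the limit integral tends to 0 as t → ∞
  set gC : ℝ × ℝ → ℂ := fun p => ((g p : ℝ) : ℂ) with hgCdef
  set L0 : (ℝ × ℝ) →L[ℝ] ℝ :=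
    (Real.pi)⁻¹ • ((ContinuousLinearMap.snd ℝ ℝ ℝ) - (ContinuousLinearMap.fst ℝ ℝ ℝ)) with hL0def
  have hL0apply : ∀ p : ℝ × ℝ, L0 p = (p.2 - p.1) / Real.pi := by
    intro p
    simp only [hL0def, ContinuousLinearMap.smul_apply, ContinuousLinearMap.sub_apply, smul_eq_mul]
    rw [div_eq_inv_mul]
    rfl
  have hL0ne : L0 ≠ 0 := by
    intro hcontra
    have h1 : L0 ((0:ℝ), (1:ℝ)) = 0 := by rw [hcontra]; rfl
    rw [hL0apply] at h1
    simp only [sub_zero] at h1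
    exact Real.pi_ne_zero (by
      field_simp at h1; simp at h1)
  have hcomp : Tendsto (fun t : ℝ => t • L0) atTop (cocompact ((ℝ × ℝ) →L[ℝ] ℝ)) := by
    rw [← Metric.cobounded_eq_cocompact, ← tendsto_norm_atTop_iff_cobounded]
    have hnorm : ∀ t : ℝ, ‖t • L0‖ = |t| * ‖L0‖ := fun t => by
      rw [show |t| = ‖t‖ from (Real.norm_eq_abs t).symm]
      exact norm_smul t L0
    simp only [hnorm]
    exact Tendsto.atTop_mul_const (norm_pos_iff.mpr hL0ne) tendsto_abs_atTop_atTop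
  have hRL0 : Tendsto (fun w : (ℝ × ℝ) →L[ℝ] ℝ => ∫ v, 𝐞 (-w v) • gC v)
      (cocompact ((ℝ × ℝ) →L[ℝ] ℝ)) (𝓝 0) :=
    tendsto_integral_exp_smul_cocompact gC volume
  have hRL1 : Tendsto (fun t : ℝ => ∫ v, 𝐞 (-((t • L0) v)) • gC v) atTop (𝓝 0) :=
    hRL0.comp hcomp
  have hchar_meas : ∀ t : ℝ, Measurable (fun v : ℝ × ℝ => 𝐞 (-((t • L0) v)) • gC v) := by
    intro t
    have hc : Continuous fun v : ℝ × ℝ => ((𝐞 (-((t • L0) v)) : Circle) : ℂ) :=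
      continuous_subtype_val.comp (Real.continuous_fourierChar.comp ((t • L0).continuous.neg))
    have heq : (fun v : ℝ × ℝ => 𝐞 (-((t • L0) v)) • gC v)
        = fun v => ((𝐞 (-((t • L0) v)) : Circle) : ℂ) * gC v := by
      funext v; rw [Circle.smul_def, smul_eq_mul]
    rw [heq]
    exact hc.measurable.mul (Complex.measurable_ofReal.comp hgm)
  have hchar_int : ∀ t : ℝ, Integrable (fun v : ℝ × ℝ => 𝐞 (-((t • L0) v)) • gC v) := by
    intro t
    apply Integrable.mono' hDom_int (hchar_meas t).aestronglyMeasurable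
    refine Eventually.of_forall fun p => ?_
    rw [Circle.norm_smul]
    simp only [hgCdef, Complex.norm_real]
    exact hg_bound p
  have hJeq : ∀ t : ℝ, ∫ p, G t p = (∫ v, 𝐞 (-((t • L0) v)) • gC v).re := by
    intro t
    have hre := integral_re (hchar_int t)
    rw [← RCLike.re_to_complex, ← hre]
    apply integral_congr_ae
    refine ae_of_all _ fun p => ?_
    simp only [Circle.smul_def, smul_eq_mul, Real.fourierChar_apply,
      RCLike.re_to_complex, hgCdef, hGdef]
    simp only [Complex.mul_re, Complex.ofReal_re, Complex.ofReal_im, mul_zero, sub_zero]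
    rw [Complex.exp_ofReal_mul_I_re]
    congr 2
    rw [ContinuousLinearMap.smul_apply, hL0apply, smul_eq_mul]
    field_simp
    ring
  have hRL : Tendsto (fun t : ℝ => ∫ p, G t p) atTop (𝓝 0) := by
    have hcont := (Complex.continuous_re.tendsto (0 : ℂ)).comp hRL1
    simp only [Complex.zero_re] at hcont
    exact hcont.congr fun t => (hJeq t).symm
  -- conclusion
  intro ε hε
  have hev : ∀ᶠ t in atTop, |∫ p, G t p| < ε / 2 := by
    have := NormedAddCommGroup.tendsto_nhds_zero.mp hRL (ε / 2) (by positivity)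
    filter_upwards [this] with t ht
    rwa [Real.norm_eq_abs] at ht
  obtain ⟨T, hT⟩ := eventually_atTop.mp hev
  refine ⟨T, fun t ht => ?_⟩
  have h1 : Tendsto (fun δ => |∫ p, Fr t δ p|) (𝓝[>] (0:ℝ)) (𝓝 |∫ p, G t p|) :=
    (continuous_abs.tendsto _).comp (hDCT t)
  have h2 : ∀ᶠ δ in 𝓝[>] (0:ℝ), |∫ p, Fr t δ p| < ε :=
    h1.eventually_lt_const (lt_of_lt_of_le (hT t ht) (by linarith))
  filter_upwards [h2, self_mem_nhdsWithin] with δ hlt hδpos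
  rw [key t δ hδpos, Complex.norm_real, Real.norm_eq_abs]
  exact hlt
end
end

section
/- For φ, ψ smooth functions compactly supported in (0,∞) and any t ∈ ℝ, lim_{ε→0⁺} ∫_t^∞ ∫∫ cos(r(ρ₁−ρ₂)) φ(ρ₁)ψ(ρ₂) e^{−εr} dρ₁dρ₂ dr = π∫φ(ρ)ψ(ρ)dρ − ∫∫ [sin(t(ρ₁−ρ₂))/(ρ₁−ρ₂)] φ(ρ₁)ψ(ρ₂) dρ₁dρ₂. -/
open MeasureTheory Filter Set Topology Pointwise

noncomputable section

namespace CosDiffAux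

/-- correlation function -/
def corr (φ ψ : ℝ → ℂ) (u : ℝ) : ℂ := ∫ ρ : ℝ, φ (u + ρ) * ψ ρ

variable {φ ψ : ℝ → ℂ}

lemma corr_continuous (hφ : Continuous φ) (hφc : HasCompactSupport φ)
    (hψ : Continuous ψ) (hψc : HasCompactSupport ψ) : Continuous (corr φ ψ) := by
  obtain ⟨C, hC⟩ := hφ.bounded_above_of_compact_support hφc
  rw [continuous_iff_continuousAt]
  intro u
  apply continuousAt_of_dominated (bound := fun ρ => C * ‖ψ ρ‖)
  · exact Eventually.of_forall fun x =>
      ((hφ.comp (continuous_const.add continuous_id)).mul hψ).aestronglyMeasurable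
  · refine Eventually.of_forall fun x => Eventually.of_forall fun ρ => ?_
    rw [norm_mul]
    exact mul_le_mul_of_nonneg_right (hC _) (norm_nonneg _)
  · exact ((hψ.integrable_of_hasCompactSupport hψc).norm.const_mul C)
  · exact Eventually.of_forall fun ρ =>
      ((hφ.comp (continuous_id.add continuous_const)).mul continuous_const).continuousAt

lemma corr_hasCompactSupport (hφc : HasCompactSupport φ) (hψc : HasCompactSupport ψ) :
    HasCompactSupport (corr φ ψ) := by
  refine HasCompactSupport.intro (K := tsupport φ + -tsupport ψ)
    (IsCompact.add hφc (IsCompact.neg hψc)) fun u hu => ?_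
  have hz : ∀ ρ : ℝ, φ (u + ρ) * ψ ρ = 0 := by
    intro ρ
    by_contra h
    rcases mul_ne_zero_iff.1 h with ⟨h1, h2⟩
    refine hu ?_
    rw [show u = (u + ρ) + (-ρ) by ring]
    exact Set.add_mem_add (subset_tsupport φ h1) (Set.neg_mem_neg.2 (subset_tsupport ψ h2))
  simp [corr, hz]

lemma corr_integrable (hφ : Continuous φ) (hφc : HasCompactSupport φ)
    (hψ : Continuous ψ) (hψc : HasCompactSupport ψ) : Integrable (corr φ ψ) :=
  (corr_continuous hφ hφc hψ hψc).integrable_of_hasCompactSupport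
    (corr_hasCompactSupport hφc hψc)

lemma corr_bound (hφ : Continuous φ) (hφc : HasCompactSupport φ)
    (hψ : Continuous ψ) (hψc : HasCompactSupport ψ) :
    ∃ C, 0 ≤ C ∧ ∀ u, ‖corr φ ψ u‖ ≤ C := by
  obtain ⟨C, hC⟩ := hφ.bounded_above_of_compact_support hφc
  have hC0 : 0 ≤ C := le_trans (norm_nonneg _) (hC 0)
  refine ⟨C * ∫ ρ, ‖ψ ρ‖, by positivity, fun u => ?_⟩
  rw [show C * ∫ ρ, ‖ψ ρ‖ = ∫ ρ, C * ‖ψ ρ‖ by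
    rw [integral_const_mul]]
  apply norm_integral_le_of_norm_le ((hψ.integrable_of_hasCompactSupport hψc).norm.const_mul C)
  refine Eventually.of_forall fun ρ => ?_
  rw [norm_mul]
  exact mul_le_mul_of_nonneg_right (hC _) (norm_nonneg _)

lemma corr_zero : corr φ ψ 0 = ∫ ρ : ℝ, φ ρ * ψ ρ := by simp [corr]


/-- shear homeomorphism -/
def shear : ℝ × ℝ ≃ₜ ℝ × ℝ where
  toFun p := (p.1 - p.2, p.2)
  invFun q := (q.1 + q.2, q.2)
  left_inv p := by simp
  right_inv q := by simp
  continuous_toFun := (continuous_fst.sub continuous_snd).prodMk continuous_snd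
  continuous_invFun := (continuous_fst.add continuous_snd).prodMk continuous_snd

lemma shear_mp : MeasurePreserving (fun p : ℝ × ℝ => (p.1 - p.2, p.2))
    ((volume : Measure ℝ).prod volume) ((volume : Measure ℝ).prod volume) :=
  measurePreserving_sub_prod volume volume

lemma kernel_integrable (hφ : Continuous φ) (hφc : HasCompactSupport φ)
    (hψ : Continuous ψ) (hψc : HasCompactSupport ψ)
    {K : ℝ → ℝ} (hK : Measurable K) {C : ℝ} (hC : ∀ x, |K x| ≤ C) :
    Integrable (fun p : ℝ × ℝ => K (p.1 - p.2) • (φ p.1 * ψ p.2))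
      ((volume : Measure ℝ).prod volume) := by
  have hbase : Integrable (fun p : ℝ × ℝ => ‖φ p.1‖ * ‖ψ p.2‖)
      ((volume : Measure ℝ).prod volume) :=
    ((hφ.integrable_of_hasCompactSupport hφc).norm).mul_prod
      ((hψ.integrable_of_hasCompactSupport hψc).norm)
  refine Integrable.mono' (hbase.const_mul C) ?_ ?_
  · exact ((hK.comp (measurable_fst.sub measurable_snd)).smul
      ((hφ.measurable.comp measurable_fst).mul
        (hψ.measurable.comp measurable_snd))).aestronglyMeasurable
  · refine Eventually.of_forall fun p => ?_
    rw [norm_smul, Real.norm_eq_abs, norm_mul]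
    exact mul_le_mul_of_nonneg_right (hC _) (by positivity)

lemma kernel_shear (hφ : Continuous φ) (hφc : HasCompactSupport φ)
    (hψ : Continuous ψ) (hψc : HasCompactSupport ψ)
    {K : ℝ → ℝ} (hK : Measurable K) {C : ℝ} (hC : ∀ x, |K x| ≤ C) :
    ∫ p : ℝ × ℝ, K (p.1 - p.2) • (φ p.1 * ψ p.2) ∂((volume : Measure ℝ).prod volume)
      = ∫ u : ℝ, K u • corr φ ψ u := by
  set g : ℝ × ℝ → ℂ := fun q => K q.1 • (φ (q.1 + q.2) * ψ q.2) with hg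
  have hemb : MeasurableEmbedding (fun p : ℝ × ℝ => (p.1 - p.2, p.2)) :=
    shear.measurableEmbedding
  have hcomp : (fun p : ℝ × ℝ => K (p.1 - p.2) • (φ p.1 * ψ p.2))
      = g ∘ (fun p : ℝ × ℝ => (p.1 - p.2, p.2)) := by
    funext p; simp [hg, sub_add_cancel]
  have hgint : Integrable g ((volume : Measure ℝ).prod volume) := by
    rw [← shear_mp.integrable_comp_emb hemb, ← hcomp]
    exact kernel_integrable hφ hφc hψ hψc hK hC
  calc ∫ p : ℝ × ℝ, K (p.1 - p.2) • (φ p.1 * ψ p.2) ∂((volume : Measure ℝ).prod volume)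
      = ∫ p : ℝ × ℝ, g (p.1 - p.2, p.2) ∂((volume : Measure ℝ).prod volume) := by
        rw [hcomp]; rfl
    _ = ∫ q : ℝ × ℝ, g q ∂((volume : Measure ℝ).prod volume) :=
        shear_mp.integral_comp hemb g
    _ = ∫ q₁ : ℝ, ∫ q₂ : ℝ, K q₁ • (φ (q₁ + q₂) * ψ q₂) := integral_prod g hgint
    _ = ∫ u : ℝ, K u • corr φ ψ u := by
        congr 1; funext u; rw [corr, integral_smul]


lemma iterated_eq (hφ : Continuous φ) (hφc : HasCompactSupport φ)
    (hψ : Continuous ψ) (hψc : HasCompactSupport ψ)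
    (hφs : tsupport φ ⊆ Ioi (0:ℝ)) (hψs : tsupport ψ ⊆ Ioi (0:ℝ))
    {K : ℝ → ℝ} (hK : Measurable K) {C : ℝ} (hC : ∀ x, |K x| ≤ C) :
    (∫ ρ₁ in Ioi (0:ℝ), ∫ ρ₂ in Ioi (0:ℝ), ((K (ρ₁ - ρ₂) : ℝ) : ℂ) * (φ ρ₁ * ψ ρ₂))
      = ∫ u : ℝ, K u • corr φ ψ u := by
  have hφ0 : ∀ x : ℝ, x ∉ Ioi (0:ℝ) → φ x = 0 := fun x hx =>
    image_eq_zero_of_notMem_tsupport (fun h => hx (hφs h))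
  have hψ0 : ∀ x : ℝ, x ∉ Ioi (0:ℝ) → ψ x = 0 := fun x hx =>
    image_eq_zero_of_notMem_tsupport (fun h => hx (hψs h))
  have step1 : (∫ ρ₁ in Ioi (0:ℝ), ∫ ρ₂ in Ioi (0:ℝ),
       ((K (ρ₁ - ρ₂) : ℝ) : ℂ) * (φ ρ₁ * ψ ρ₂))
      = ∫ ρ₁ : ℝ, ∫ ρ₂ : ℝ, ((K (ρ₁ - ρ₂) : ℝ) : ℂ) * (φ ρ₁ * ψ ρ₂) := by
    rw [setIntegral_eq_integral_of_forall_compl_eq_zero (fun ρ₁ hρ₁ => by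
      simp [hφ0 ρ₁ hρ₁])]
    congr 1; funext ρ₁
    rw [setIntegral_eq_integral_of_forall_compl_eq_zero (fun ρ₂ hρ₂ => by
      simp [hψ0 ρ₂ hρ₂])]
  rw [step1, ← kernel_shear hφ hφc hψ hψc hK hC,
    integral_prod _ (kernel_integrable hφ hφc hψ hψc hK hC)]
  simp [Complex.real_smul]

lemma r_integral {ε : ℝ} (hε : 0 < ε) (t x : ℝ) :
    ∫ r in Ioi t, Real.exp (-(ε * r)) * Real.cos (r * x)
      = Real.exp (-(ε * t)) * (ε * Real.cos (t * x) - x * Real.sin (t * x)) / (ε ^ 2 + x ^ 2) := by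
  have hden : (0:ℝ) < ε ^ 2 + x ^ 2 := by positivity
  set F : ℝ → ℝ := fun r =>
    Real.exp (-(ε * r)) * (x * Real.sin (r * x) - ε * Real.cos (r * x)) / (ε ^ 2 + x ^ 2)
    with hF
  have hderiv : ∀ r, HasDerivAt F (Real.exp (-(ε * r)) * Real.cos (r * x)) r := by
    intro r
    have h1 : HasDerivAt (fun r : ℝ => -(ε * r)) (-ε) r := by
      have h := ((hasDerivAt_id r).const_mul ε).neg
      rw [mul_one] at h
      exact h
    have hexp : HasDerivAt (fun r : ℝ => Real.exp (-(ε * r)))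
        (Real.exp (-(ε * r)) * (-ε)) r := h1.exp
    have hrx : HasDerivAt (fun r : ℝ => r * x) x r := by
      exact hasDerivAt_mul_const x
    have hsin : HasDerivAt (fun r : ℝ => Real.sin (r * x)) (Real.cos (r * x) * x) r := hrx.sin
    have hcos : HasDerivAt (fun r : ℝ => Real.cos (r * x)) (-Real.sin (r * x) * x) r := hrx.cos
    have hin : HasDerivAt (fun r : ℝ => x * Real.sin (r * x) - ε * Real.cos (r * x))
        (x * (Real.cos (r * x) * x) - ε * (-Real.sin (r * x) * x)) r :=
      (hsin.const_mul x).sub (hcos.const_mul ε)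
    have := (hexp.mul hin).div_const (ε ^ 2 + x ^ 2)
    refine HasDerivAt.congr_deriv this ?_
    rw [div_eq_iff hden.ne']
    ring
  have hlim : Tendsto F atTop (𝓝 0) := by
    have h0 : Tendsto (fun r : ℝ => Real.exp (-(ε * r)) * ((|x| + ε) / (ε ^ 2 + x ^ 2)))
        atTop (𝓝 0) := by
      rw [show (0:ℝ) = 0 * ((|x| + ε) / (ε ^ 2 + x ^ 2)) by ring]
      refine Tendsto.mul_const _ ?_
      have h1 : Tendsto (fun r : ℝ => ε * r) atTop atTop :=
        Tendsto.const_mul_atTop hε tendsto_id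
      exact Real.tendsto_exp_neg_atTop_nhds_zero.comp h1
    refine squeeze_zero_norm (fun r => ?_) h0
    show |F r| ≤ _
    rw [hF]
    simp only []
    rw [abs_div, abs_of_pos hden, abs_mul, Real.abs_exp, mul_div_assoc]
    gcongr
    refine (abs_sub _ _).trans ?_
    rw [abs_mul, abs_mul, abs_of_pos hε]
    nlinarith [Real.abs_sin_le_one (r * x), Real.abs_cos_le_one (r * x), abs_nonneg x,
      Real.abs_sin_le_one (r * x)]
  have hint : IntegrableOn (fun r : ℝ => Real.exp (-(ε * r)) * Real.cos (r * x)) (Ioi t) := by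
    refine Integrable.mono' (g := fun r : ℝ => Real.exp (-(ε * r))) ?_ ?_ ?_
    · exact (show IntegrableOn (fun r : ℝ => Real.exp (-(ε * r))) (Ioi t) by
        simpa only [neg_mul] using exp_neg_integrableOn_Ioi t hε).integrable
    · exact (((Real.continuous_exp.comp ((continuous_const.mul continuous_id).neg)).mul
        (Real.continuous_cos.comp (continuous_id.mul continuous_const)))).aestronglyMeasurable
    · refine Eventually.of_forall fun r => ?_
      rw [Real.norm_eq_abs, abs_mul, Real.abs_exp]
      nlinarith [Real.abs_cos_le_one (r * x), Real.exp_pos (-(ε * r))]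
  rw [integral_Ioi_of_hasDerivAt_of_tendsto' (fun r _ => hderiv r) hint hlim]
  simp only [hF]
  ring

lemma swap_r (hφ : Continuous φ) (hφc : HasCompactSupport φ)
    (hψ : Continuous ψ) (hψc : HasCompactSupport ψ)
    {ε : ℝ} (hε : 0 < ε) (t : ℝ) :
    (∫ r in Ioi t, Real.exp (-(ε * r)) • ∫ u : ℝ, Real.cos (r * u) • corr φ ψ u)
      = ∫ u : ℝ, (∫ r in Ioi t, Real.exp (-(ε * r)) * Real.cos (r * u)) • corr φ ψ u := by
  have hcorr := corr_integrable hφ hφc hψ hψc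
  have hint : Integrable (Function.uncurry fun (r : ℝ) (u : ℝ) =>
      (Real.exp (-(ε * r)) * Real.cos (r * u)) • corr φ ψ u)
      ((volume.restrict (Ioi t)).prod volume) := by
    have hbase : Integrable (fun p : ℝ × ℝ => Real.exp (-(ε * p.1)) * ‖corr φ ψ p.2‖)
        ((volume.restrict (Ioi t)).prod volume) := by
      refine Integrable.mul_prod (f := fun r : ℝ => Real.exp (-(ε * r))) ?_ hcorr.norm
      exact (show IntegrableOn (fun r : ℝ => Real.exp (-(ε * r))) (Ioi t) by
        simpa only [neg_mul] using exp_neg_integrableOn_Ioi t hε).integrable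
    refine Integrable.mono' hbase ?_ ?_
    · refine Continuous.aestronglyMeasurable ?_
      exact ((Real.continuous_exp.comp ((continuous_const.mul continuous_fst).neg)).mul
        (Real.continuous_cos.comp (continuous_fst.mul continuous_snd))).smul
        ((corr_continuous hφ hφc hψ hψc).comp continuous_snd)
    · refine Eventually.of_forall fun p => ?_
      rw [Function.uncurry, norm_smul, Real.norm_eq_abs, abs_mul, Real.abs_exp]
      have h4 : Real.exp (-(ε * p.1)) * |Real.cos (p.1 * p.2)| * ‖corr φ ψ p.2‖
          ≤ Real.exp (-(ε * p.1)) * 1 * ‖corr φ ψ p.2‖ := by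
        gcongr
        exact Real.abs_cos_le_one _
      simpa using h4
  calc (∫ r in Ioi t, Real.exp (-(ε * r)) • ∫ u : ℝ, Real.cos (r * u) • corr φ ψ u)
      = ∫ r in Ioi t, ∫ u : ℝ, (Real.exp (-(ε * r)) * Real.cos (r * u)) • corr φ ψ u := by
        congr 1; funext r
        rw [← integral_smul]
        congr 1; funext u
        rw [smul_smul]
    _ = ∫ u : ℝ, ∫ r in Ioi t, (Real.exp (-(ε * r)) * Real.cos (r * u)) • corr φ ψ u :=
        integral_integral_swap hint
    _ = ∫ u : ℝ, (∫ r in Ioi t, Real.exp (-(ε * r)) * Real.cos (r * u)) • corr φ ψ u := by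
        congr 1; funext u
        rw [integral_smul_const]

lemma poisson {G : ℝ → ℂ} (hG : Continuous G) {C : ℝ} (hC : ∀ u, ‖G u‖ ≤ C) :
    Tendsto (fun ε : ℝ => ∫ u : ℝ, (ε / (ε ^ 2 + u ^ 2)) • G u) (𝓝[>] (0:ℝ))
      (𝓝 ((Real.pi : ℝ) • G 0)) := by
  have key : ∀ ε ∈ Ioi (0:ℝ), (∫ u : ℝ, (ε / (ε ^ 2 + u ^ 2)) • G u)
      = ∫ v : ℝ, ((1 + v ^ 2)⁻¹ : ℝ) • G (ε * v) := by
    intro ε hε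
    rw [mem_Ioi] at hε
    have h := MeasureTheory.Measure.integral_comp_mul_left
      (fun u : ℝ => (ε / (ε ^ 2 + u ^ 2)) • G u) ε
    rw [abs_inv, abs_of_pos hε] at h
    have h2 : ε • ∫ x : ℝ, (ε / (ε ^ 2 + (ε * x) ^ 2)) • G (ε * x)
        = ∫ u : ℝ, (ε / (ε ^ 2 + u ^ 2)) • G u := by
      rw [h, smul_smul, mul_inv_cancel₀ (ne_of_gt hε), one_smul]
    rw [← h2, ← integral_smul]
    congr 1; funext v
    rw [smul_smul]
    congr 1
    have h1v : (0:ℝ) < 1 + v ^ 2 := by positivity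
    field_simp
  have hpi : (Real.pi : ℝ) • G 0 = ∫ v : ℝ, ((1 + v ^ 2)⁻¹ : ℝ) • G 0 := by
    rw [integral_smul_const, integral_univ_inv_one_add_sq]
  rw [hpi]
  refine Tendsto.congr' (eventually_mem_nhdsWithin.mono fun ε hε => (key ε hε).symm) ?_
  have hcont1 : Continuous (fun v : ℝ => ((1 + v ^ 2)⁻¹ : ℝ)) := by
    refine Continuous.inv₀ (by continuity) fun v => by positivity
  refine tendsto_integral_filter_of_dominated_convergence
      (bound := fun v : ℝ => (1 + v ^ 2)⁻¹ * C) ?_ ?_ ?_ ?_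
  · refine Eventually.of_forall fun ε => Continuous.aestronglyMeasurable ?_
    exact hcont1.smul (hG.comp (continuous_const.mul continuous_id))
  · refine Eventually.of_forall fun ε => Eventually.of_forall fun v => ?_
    rw [norm_smul, Real.norm_eq_abs, abs_of_pos (by positivity : (0:ℝ) < (1 + v ^ 2)⁻¹)]
    exact mul_le_mul_of_nonneg_left (hC _) (by positivity)
  · exact integrable_inv_one_add_sq.mul_const C
  · refine Eventually.of_forall fun v => ?_
    have hv : Tendsto (fun ε : ℝ => ε * v) (𝓝[>] (0:ℝ)) (𝓝 0) := by
      have h1 : Tendsto (fun ε : ℝ => ε * v) (𝓝 (0:ℝ)) (𝓝 (0 * v)) :=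
        (continuous_id.mul continuous_const).tendsto 0
      rw [zero_mul] at h1
      exact h1.mono_left nhdsWithin_le_nhds
    exact (hG.continuousAt.tendsto.comp hv).const_smul _


lemma sinpart (hφ : Continuous φ) (hφc : HasCompactSupport φ)
    (hψ : Continuous ψ) (hψc : HasCompactSupport ψ) (t : ℝ) :
    Tendsto (fun ε : ℝ => ∫ u : ℝ, (u * Real.sin (t * u) / (ε ^ 2 + u ^ 2)) • corr φ ψ u)
      (𝓝[>] (0:ℝ)) (𝓝 (∫ u : ℝ, (Real.sin (t * u) / u) • corr φ ψ u)) := by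
  have hcorr := corr_integrable hφ hφc hψ hψc
  have hcc := corr_continuous hφ hφc hψ hψc
  have hne : ∀ᵐ u : ℝ, u ≠ 0 := by
    refine eventually_of_mem (U := ({(0:ℝ)} : Set ℝ)ᶜ) ?_ fun u hu => hu
    rw [mem_ae_iff, compl_compl]
    exact Real.volume_singleton
  refine tendsto_integral_filter_of_dominated_convergence
      (bound := fun u : ℝ => |t| * ‖corr φ ψ u‖) ?_ ?_ ?_ ?_
  · refine eventually_mem_nhdsWithin.mono fun ε hε => ?_
    rw [mem_Ioi] at hε
    refine Continuous.aestronglyMeasurable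
      (Continuous.smul (f := fun u => u * Real.sin (t * u) / (ε ^ 2 + u ^ 2)) ?_ hcc)
    exact (continuous_id.mul (Real.continuous_sin.comp (continuous_const.mul continuous_id))).div
      (continuous_const.add (continuous_pow 2)) (fun u => by positivity)
  · refine eventually_mem_nhdsWithin.mono fun ε hε => Eventually.of_forall fun u => ?_
    rw [mem_Ioi] at hε
    have hden : (0:ℝ) < ε ^ 2 + u ^ 2 := by positivity
    rw [norm_smul, Real.norm_eq_abs]
    refine mul_le_mul_of_nonneg_right ?_ (norm_nonneg _)
    rw [abs_div, abs_of_pos hden, div_le_iff₀ hden, abs_mul]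
    have hs : |Real.sin (t * u)| ≤ |t| * |u| := by
      have h := Real.abs_sin_le_abs (x := t * u)
      rwa [abs_mul] at h
    calc |u| * |Real.sin (t * u)| ≤ |u| * (|t| * |u|) :=
          mul_le_mul_of_nonneg_left hs (abs_nonneg u)
      _ = |t| * |u| ^ 2 := by ring
      _ = |t| * u ^ 2 := by rw [sq_abs]
      _ ≤ |t| * (ε ^ 2 + u ^ 2) := by nlinarith [abs_nonneg t, sq_nonneg ε]
  · exact hcorr.norm.const_mul |t|
  · refine hne.mono fun u hu => ?_
    have hu2 : u ^ 2 ≠ 0 := pow_ne_zero 2 hu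
    have hd : Tendsto (fun ε : ℝ => u * Real.sin (t * u) / (ε ^ 2 + u ^ 2)) (𝓝 (0:ℝ))
        (𝓝 (u * Real.sin (t * u) / ((0:ℝ) ^ 2 + u ^ 2))) := by
      refine Tendsto.div tendsto_const_nhds ?_ (by simpa using hu2)
      exact ((continuous_pow 2).add continuous_const).tendsto 0
    have heq : u * Real.sin (t * u) / ((0:ℝ) ^ 2 + u ^ 2) = Real.sin (t * u) / u := by
      rw [show (0:ℝ) ^ 2 + u ^ 2 = u * u by ring]
      rw [mul_div_mul_left _ _ hu]
    rw [heq] at hd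
    exact (hd.smul_const _).mono_left nhdsWithin_le_nhds

lemma split (hφ : Continuous φ) (hφc : HasCompactSupport φ)
    (hψ : Continuous ψ) (hψc : HasCompactSupport ψ)
    {ε : ℝ} (hε : 0 < ε) (t : ℝ) :
    (∫ u : ℝ, (∫ r in Ioi t, Real.exp (-(ε * r)) * Real.cos (r * u)) • corr φ ψ u)
      = Real.exp (-(ε * t)) •
        ((∫ u : ℝ, (ε / (ε ^ 2 + u ^ 2)) • (Real.cos (t * u) • corr φ ψ u))
          - ∫ u : ℝ, (u * Real.sin (t * u) / (ε ^ 2 + u ^ 2)) • corr φ ψ u) := by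
  have hcorr := corr_integrable hφ hφc hψ hψc
  have hcc := corr_continuous hφ hφc hψ hψc
  have intA : Integrable (fun u : ℝ => (ε / (ε ^ 2 + u ^ 2)) • (Real.cos (t * u) • corr φ ψ u)) := by
    refine Integrable.mono' (hcorr.norm.const_mul (1 / ε)) ?_ ?_
    · refine Continuous.aestronglyMeasurable ?_
      refine Continuous.smul (f := fun u => ε / (ε ^ 2 + u ^ 2)) ?_ ((Real.continuous_cos.comp (continuous_const.mul continuous_id)).smul hcc)
      exact continuous_const.div (continuous_const.add (continuous_pow 2)) (fun u => by positivity)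
    · refine Eventually.of_forall fun u => ?_
      rw [norm_smul, norm_smul, Real.norm_eq_abs, Real.norm_eq_abs]
      have hden : (0:ℝ) < ε ^ 2 + u ^ 2 := by positivity
      have h1 : |ε / (ε ^ 2 + u ^ 2)| ≤ 1 / ε := by
        rw [abs_div, abs_of_pos hden, abs_of_pos hε, div_le_div_iff₀ hden (by positivity)]
        nlinarith [sq_nonneg u]
      have h2 : |Real.cos (t * u)| * ‖corr φ ψ u‖ ≤ ‖corr φ ψ u‖ := by
        have := Real.abs_cos_le_one (t * u)
        nlinarith [norm_nonneg (corr φ ψ u)]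
      calc |ε / (ε ^ 2 + u ^ 2)| * (|Real.cos (t * u)| * ‖corr φ ψ u‖)
          ≤ (1 / ε) * ‖corr φ ψ u‖ := by
            refine mul_le_mul h1 h2 (by positivity) (by positivity)
        _ = 1 / ε * ‖corr φ ψ u‖ := by ring
  have intB : Integrable (fun u : ℝ => (u * Real.sin (t * u) / (ε ^ 2 + u ^ 2)) • corr φ ψ u) := by
    refine Integrable.mono' (hcorr.norm.const_mul |t|) ?_ ?_
    · refine Continuous.aestronglyMeasurable
        (Continuous.smul (f := fun u => u * Real.sin (t * u) / (ε ^ 2 + u ^ 2)) ?_ hcc)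
      exact (continuous_id.mul (Real.continuous_sin.comp (continuous_const.mul continuous_id))).div
        (continuous_const.add (continuous_pow 2)) (fun u => by positivity)
    · refine Eventually.of_forall fun u => ?_
      have hden : (0:ℝ) < ε ^ 2 + u ^ 2 := by positivity
      rw [norm_smul, Real.norm_eq_abs]
      refine mul_le_mul_of_nonneg_right ?_ (norm_nonneg _)
      rw [abs_div, abs_of_pos hden, div_le_iff₀ hden, abs_mul]
      have hs : |Real.sin (t * u)| ≤ |t| * |u| := by
        have h := Real.abs_sin_le_abs (x := t * u)
        rwa [abs_mul] at h
      calc |u| * |Real.sin (t * u)| ≤ |u| * (|t| * |u|) :=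
            mul_le_mul_of_nonneg_left hs (abs_nonneg u)
        _ = |t| * |u| ^ 2 := by ring
        _ = |t| * u ^ 2 := by rw [sq_abs]
        _ ≤ |t| * (ε ^ 2 + u ^ 2) := by nlinarith [abs_nonneg t, sq_nonneg ε]
  rw [← integral_sub intA intB, ← integral_smul]
  refine integral_congr_ae (Eventually.of_forall fun u => ?_)
  simp only []
  rw [r_integral hε t u]
  rw [smul_sub, smul_smul, smul_smul, smul_smul, ← sub_smul]
  congr 1
  ring

end CosDiffAux

open CosDiffAux in
/-- For `φ, ψ ∈ C_c^∞((0,∞))` and any `t ∈ ℝ`,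
`lim_{ε→0⁺} ∫_t^∞ ∫∫ cos(r(ρ₁−ρ₂)) φ(ρ₁)ψ(ρ₂) e^{−εr} dρ₁dρ₂ dr
  = π∫φψ − ∫∫ sin(t(ρ₁−ρ₂))/(ρ₁−ρ₂) φ(ρ₁)ψ(ρ₂) dρ₁dρ₂`. -/
theorem cos_difference_kernel_limit
    (φ ψ : ℝ → ℂ) (hφ : ContDiff ℝ (⊤ : ℕ∞) φ) (hψ : ContDiff ℝ (⊤ : ℕ∞) ψ)
    (hφc : HasCompactSupport φ) (hψc : HasCompactSupport ψ)
    (hφs : tsupport φ ⊆ Ioi (0:ℝ)) (hψs : tsupport ψ ⊆ Ioi (0:ℝ)) (t : ℝ) :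
    Tendsto (fun ε : ℝ =>
        ∫ r in Ioi t, Real.exp (-(ε * r)) •
          ∫ ρ₁ in Ioi (0:ℝ), ∫ ρ₂ in Ioi (0:ℝ),
            ((Real.cos (r * (ρ₁ - ρ₂)) : ℝ) : ℂ) * (φ ρ₁ * ψ ρ₂))
      (𝓝[>] 0)
      (𝓝 ((Real.pi : ℂ) * (∫ ρ in Ioi (0:ℝ), φ ρ * ψ ρ) -
        ∫ ρ₁ in Ioi (0:ℝ), ∫ ρ₂ in Ioi (0:ℝ),
          ((Real.sin (t * (ρ₁ - ρ₂)) / (ρ₁ - ρ₂) : ℝ) : ℂ) * (φ ρ₁ * ψ ρ₂))) := by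
  have hφct : Continuous φ := hφ.continuous
  have hψct : Continuous ψ := hψ.continuous
  obtain ⟨CH, hCH0, hCH⟩ := corr_bound hφct hφc hψct hψc
  have hcc := corr_continuous hφct hφc hψct hψc
  -- eventual equality
  have heq : ∀ᶠ ε in 𝓝[>] (0:ℝ),
      (∫ r in Ioi t, Real.exp (-(ε * r)) •
          ∫ ρ₁ in Ioi (0:ℝ), ∫ ρ₂ in Ioi (0:ℝ),
            ((Real.cos (r * (ρ₁ - ρ₂)) : ℝ) : ℂ) * (φ ρ₁ * ψ ρ₂))
        = Real.exp (-(ε * t)) •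
          ((∫ u : ℝ, (ε / (ε ^ 2 + u ^ 2)) • (Real.cos (t * u) • corr φ ψ u))
            - ∫ u : ℝ, (u * Real.sin (t * u) / (ε ^ 2 + u ^ 2)) • corr φ ψ u) := by
    refine eventually_mem_nhdsWithin.mono fun ε hε => ?_
    rw [mem_Ioi] at hε
    have step1 : (∫ r in Ioi t, Real.exp (-(ε * r)) •
          ∫ ρ₁ in Ioi (0:ℝ), ∫ ρ₂ in Ioi (0:ℝ),
            ((Real.cos (r * (ρ₁ - ρ₂)) : ℝ) : ℂ) * (φ ρ₁ * ψ ρ₂))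
        = ∫ r in Ioi t, Real.exp (-(ε * r)) • ∫ u : ℝ, Real.cos (r * u) • corr φ ψ u := by
      refine integral_congr_ae (Eventually.of_forall fun r => ?_)
      simp only []
      congr 1
      exact iterated_eq hφct hφc hψct hψc hφs hψs
        (K := fun x => Real.cos (r * x))
        (Real.measurable_cos.comp (measurable_const.mul measurable_id))
        (C := 1) (fun x => Real.abs_cos_le_one _)
    rw [step1, swap_r hφct hφc hψct hψc hε t, split hφct hφc hψct hψc hε t]
  refine Tendsto.congr' (heq.mono fun ε h => h.symm) ?_
  -- limits
  have hexp : Tendsto (fun ε : ℝ => Real.exp (-(ε * t))) (𝓝[>] (0:ℝ)) (𝓝 1) := by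
    have h1 : Tendsto (fun ε : ℝ => Real.exp (-(ε * t))) (𝓝 (0:ℝ))
        (𝓝 (Real.exp (-((0:ℝ) * t)))) :=
      (Real.continuous_exp.comp ((continuous_id.mul continuous_const).neg)).tendsto 0
    simp only [zero_mul, neg_zero, Real.exp_zero] at h1
    exact h1.mono_left nhdsWithin_le_nhds
  have hA : Tendsto (fun ε : ℝ => ∫ u : ℝ, (ε / (ε ^ 2 + u ^ 2)) •
      (Real.cos (t * u) • corr φ ψ u)) (𝓝[>] (0:ℝ))
      (𝓝 ((Real.pi : ℝ) • (Real.cos (t * 0) • corr φ ψ 0))) := by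
    refine poisson ((Real.continuous_cos.comp (continuous_const.mul continuous_id)).smul hcc)
      (C := CH) fun u => ?_
    rw [norm_smul, Real.norm_eq_abs]
    have h1 := Real.abs_cos_le_one (t * u)
    have h2 := hCH u
    nlinarith [norm_nonneg (corr φ ψ u), abs_nonneg (Real.cos (t * u))]
  have hB := sinpart hφct hφc hψct hψc t
  have hfinal := Tendsto.smul hexp (hA.sub hB)
  rw [one_smul] at hfinal
  have hres : (∫ ρ in Ioi (0:ℝ), φ ρ * ψ ρ) = ∫ ρ : ℝ, φ ρ * ψ ρ :=
    setIntegral_eq_integral_of_forall_compl_eq_zero fun x hx => by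
      show φ x * ψ x = 0
      rw [image_eq_zero_of_notMem_tsupport fun h => hx (hφs h), zero_mul]
  have hsinc : (∫ ρ₁ in Ioi (0:ℝ), ∫ ρ₂ in Ioi (0:ℝ),
        ((Real.sin (t * (ρ₁ - ρ₂)) / (ρ₁ - ρ₂) : ℝ) : ℂ) * (φ ρ₁ * ψ ρ₂))
      = ∫ u : ℝ, (Real.sin (t * u) / u) • corr φ ψ u := by
    refine iterated_eq hφct hφc hψct hψc hφs hψs
      (K := fun x => Real.sin (t * x) / x)
      ((Real.measurable_sin.comp (measurable_const.mul measurable_id)).div measurable_id)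
      (C := |t|) (fun x => ?_)
    rcases eq_or_ne x 0 with hx | hx
    · simp [hx]
    · rw [abs_div, div_le_iff₀ (abs_pos.2 hx)]
      have h := Real.abs_sin_le_abs (x := t * x)
      rwa [abs_mul] at h
  have hval : ((Real.pi : ℂ) * (∫ ρ in Ioi (0:ℝ), φ ρ * ψ ρ) -
        ∫ ρ₁ in Ioi (0:ℝ), ∫ ρ₂ in Ioi (0:ℝ),
          ((Real.sin (t * (ρ₁ - ρ₂)) / (ρ₁ - ρ₂) : ℝ) : ℂ) * (φ ρ₁ * ψ ρ₂))
      = Real.pi • (Real.cos (t * 0) • corr φ ψ 0)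
        - ∫ u : ℝ, (Real.sin (t * u) / u) • corr φ ψ u := by
    rw [hsinc]
    congr 1
    rw [mul_zero, Real.cos_zero, one_smul, corr_zero, Complex.real_smul, hres]
  rw [hval]
  exact hfinal
end
end
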